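/- arXiv:1111.5150 — 10 statements merged into one kernel-verified Lean document; each statement's English description precedes it below -/
import Mathlib

section
/- Let κ be a cardinal and λ a cardinal such that κ has the polarized partition property for λ: for every function c from the finite subsets of κ into λ there exists an infinite block sequence (s_i)_{i<ω} of 2-element subsets of κ (i.e., max s_i < min s_{i+1} for all i) such that for every n ∈ ℕ the value c({x_0, …, x_{n−1}}) is the same for all choices x_0 ∈ s_0, …, x_{n−1} ∈ s_{n−1}. Then for every n ∈ ℕ the chromatic number of the positional graph G_n(κ) is greater than λ: for every c : [κ]^{<ω} → λ there are distinct finite subsets s, t of κ with c(s) = c(t) that are not in n-Δ-position. -/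
/-- `s < t` for finite sets of ordinals. -/
def BlkLt (s t : Finset Ordinal) : Prop := ∀ a ∈ s, ∀ b ∈ t, a < b

/-- `s ⊑ t` : `s` is an initial part of `t`. -/
def InitSeg (s t : Finset Ordinal) : Prop := s ⊆ t ∧ BlkLt s (t \ s)

/-- `A` and `B` are in `n`-Δ-position. -/
def DeltaPos (n : ℕ) (A B : Finset Ordinal) : Prop :=
  ∃ I J : Finset Ordinal, I ⊆ A ∩ B ∧ J ⊆ A ∩ B ∧ BlkLt I J ∧
    A ∩ B = I ∪ J ∧ J.card ≤ n ∧ InitSeg I A ∧ InitSeg I B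

/-
Colour the finite subsets of `κ` by `c` and take a homogeneous block sequence `(s i)` of pairs.
Let `A` consist of the minima of `s 0, …, s (n+1)`, and let `B` be `A` with `min (s 0)` replaced
by `max (s 0)`. Homogeneity gives `c A = c B`. Their intersection has `n + 1` elements, so an
`n`-Δ-decomposition `I < J` of it needs `I ≠ ∅`; but `I ⊑ A` then forces the elements of `I` below
`min A = min (s 0)`, which lies in `A \ B`, contradicting `I ⊆ A ∩ B`.
-/

open Finset

theorem deltaPos_self (n : ℕ) (A : Finset Ordinal) : DeltaPos n A A :=
  ⟨A, ∅, by simp, by simp, by simp [BlkLt], by simp, by simp, ⟨subset_rfl, by simp [BlkLt]⟩,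
    ⟨subset_rfl, by simp [BlkLt]⟩⟩

theorem not_deltaPos_of_min_not_mem {n : ℕ} {A B : Finset Ordinal} {a : Ordinal}
    (haA : a ∈ A) (haB : a ∉ B) (ha_le : ∀ b ∈ A, a ≤ b) (hcard : n < #(A ∩ B)) :
    ¬ DeltaPos n A B := by
  rintro ⟨I, J, hI, -, -, hAB, hJ, ⟨-, hIA⟩, -⟩
  obtain rfl | ⟨z, hz⟩ := I.eq_empty_or_nonempty
  · rw [hAB, empty_union] at hcard
    omega
  · have hzAB := mem_inter.mp (hI hz)
    have haI : a ∉ I := fun h => haB (mem_inter.mp (hI h)).2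
    have hza : z < a := hIA z hz a (mem_sdiff.mpr ⟨haA, haI⟩)
    exact (ha_le z hzAB.1).not_gt hza

theorem not_deltaPos_image_update {x : ℕ → Ordinal} (hx : StrictMono x) {b : Ordinal}
    (hb : b ≠ x 0) (n : ℕ) :
    ¬ DeltaPos n ((range (n + 2)).image x) ((range (n + 2)).image (Function.update x 0 b)) := by
  set y := Function.update x 0 b
  have hx0B : x 0 ∉ (range (n + 2)).image y := by
    simp only [mem_image, not_exists, not_and]
    intro j _ hj
    rcases eq_or_ne j 0 with rfl | hj0
    · exact hb (by simpa [y] using hj)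
    · simp only [y, Function.update_of_ne hj0] at hj
      exact hj0 (hx.injective hj)
  have hinter : (Ico 1 (n + 2)).image x ⊆ (range (n + 2)).image x ∩ (range (n + 2)).image y := by
    intro a ha
    obtain ⟨i, hi, rfl⟩ := mem_image.mp ha
    rw [mem_Ico] at hi
    have hy : y i = x i := Function.update_of_ne (by omega) _ _
    have hi' : i ∈ range (n + 2) := mem_range.mpr (by omega)
    exact mem_inter.mpr ⟨mem_image_of_mem x hi', hy ▸ mem_image_of_mem y hi'⟩
  refine not_deltaPos_of_min_not_mem (mem_image_of_mem x (by simp)) hx0B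
    (forall_mem_image.mpr fun i _ => hx.monotone (Nat.zero_le i)) ?_
  calc n < #((Ico 1 (n + 2)).image x) := by rw [card_image_of_injective _ hx.injective]; simp
    _ ≤ _ := card_le_card hinter

theorem strictMono_min'_of_blkLt {s : ℕ → Finset Ordinal} (hne : ∀ i, (s i).Nonempty)
    (hblk : ∀ i, BlkLt (s i) (s (i + 1))) : StrictMono fun i => (s i).min' (hne i) :=
  strictMono_nat_of_lt_succ fun i => hblk i _ (min'_mem _ _) _ (min'_mem _ _)

/-- If `κ` has the polarized partition property for `λ` many colors, then for every
`n` the chromatic number of the positional graph `G_n(κ)` is greater than `λ`. -/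
theorem stmt1 (κ lam : Cardinal)
    (hpol : ∀ c : Finset Ordinal → lam.out,
      ∃ s : ℕ → Finset Ordinal,
        (∀ i, (s i).card = 2) ∧
        (∀ i, ∀ a ∈ s i, a < κ.ord) ∧
        (∀ i, BlkLt (s i) (s (i + 1))) ∧
        (∀ m : ℕ, ∀ x y : ℕ → Ordinal,
          (∀ i < m, x i ∈ s i) → (∀ i < m, y i ∈ s i) →
          c ((Finset.range m).image x) = c ((Finset.range m).image y)))
    (n : ℕ) (c : Finset Ordinal → lam.out) :
    ∃ s t : Finset Ordinal,
      (∀ a ∈ s, a < κ.ord) ∧ (∀ a ∈ t, a < κ.ord) ∧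
      s ≠ t ∧ c s = c t ∧ ¬ DeltaPos n s t := by
  obtain ⟨s, hcard, hκ, hblk, hhom⟩ := hpol c
  have hne : ∀ i, (s i).Nonempty := fun i => card_pos.mp (by rw [hcard i]; norm_num)
  set x : ℕ → Ordinal := fun i => (s i).min' (hne i)
  set y : ℕ → Ordinal := Function.update x 0 ((s 0).max' (hne 0))
  have hxmem : ∀ i, x i ∈ s i := fun i => min'_mem _ _
  have hymem : ∀ i, y i ∈ s i := by
    intro i
    rcases eq_or_ne i 0 with rfl | hi
    · simpa [y] using max'_mem _ _
    · simpa [y, hi] using hxmem i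
  have hmax_ne_min : (s 0).max' (hne 0) ≠ x 0 :=
    (min'_lt_max'_of_card (s 0) (by rw [hcard 0]; norm_num)).ne'
  have hnot := not_deltaPos_image_update (strictMono_min'_of_blkLt hne hblk) hmax_ne_min n
  refine ⟨_, _, forall_mem_image.mpr fun i _ => hκ i _ (hxmem i),
    forall_mem_image.mpr fun i _ => hκ i _ (hymem i), ?_,
    hhom _ x y (fun i _ => hxmem i) (fun i _ => hymem i), hnot⟩
  intro hAB
  rw [hAB] at hnot
  exact hnot (deltaPos_self n _)
end

section
/- Fix n ≥ 1 and for each k with 1 ≤ k ≤ n a function ρ^{(k)} assigning to each pair of distinct ordinals α, β < ω_k an ordinal ρ^{(k)}(α,β) = ρ^{(k)}(β,α) < ω_{k−1} such that for all α < β < γ < ω_k: (a) ρ^{(k)}(α,β) ≤ max{ρ^{(k)}(α,γ), ρ^{(k)}(β,γ)} and ρ^{(k)}(α,γ) ≤ max{ρ^{(k)}(α,β), ρ^{(k)}(β,γ)}; (b) ρ^{(k)}(α,β) ≠ ρ^{(k)}(ᾱ,β) whenever α ≠ ᾱ are both < β; (c) ρ^{(k)}(α,β) ≠ ρ^{(k)}(β,γ).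 Define f_i on strictly increasing (i+1)-tuples of ordinals below ω_n, with values below ω_{n−i}, by f_0(α) = α and f_i(α_0,…,α_i) = ρ^{(n−i+1)}(f_{i−1}(α_0,…,α_{i−1}), f_{i−1}(α_1,…,α_i)) (setting the value to 0 if the two arguments coincide). Then: if α, ᾱ < α_0 < … < α_{i−1} < ω_n satisfy f_i(α, α_0, …, α_{i−1}) = f_i(ᾱ, α_0, …, α_{i−1}) and, for every j < i, both f_j(α, α_0, …, α_{j−1}) < f_j(α_0, …, α_j) and f_j(ᾱ, α_0, …, α_{j−1}) < f_j(α_0, …, α_j), then α = ᾱ. -/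
/-- `ω_k` as an ordinal (`ω_0 = ω`). -/
noncomputable def omegaOrd (k : ℕ) : Ordinal := (Cardinal.aleph k).ord

/-- A system of injective ρ-functions: for each `1 ≤ k ≤ n`, `ρ k` is symmetric on
distinct ordinals below `ω_k`, takes values below `ω_{k-1}`, and satisfies (a)
subadditivity, (b) injectivity in the first coordinate, and (c) `ρ(α,β) ≠ ρ(β,γ)`. -/
def IsRhoSystem (n : ℕ) (ρ : ℕ → Ordinal → Ordinal → Ordinal) : Prop :=
  ∀ k : ℕ, 1 ≤ k → k ≤ n →
    (∀ α β, α < omegaOrd k → β < omegaOrd k → α ≠ β → ρ k α β = ρ k β α) ∧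
    (∀ α β, α < omegaOrd k → β < omegaOrd k → α ≠ β → ρ k α β < omegaOrd (k - 1)) ∧
    (∀ α β γ, α < β → β < γ → γ < omegaOrd k →
      ρ k α β ≤ max (ρ k α γ) (ρ k β γ) ∧ ρ k α γ ≤ max (ρ k α β) (ρ k β γ)) ∧
    (∀ α α' β, α < β → α' < β → β < omegaOrd k → α ≠ α' → ρ k α β ≠ ρ k α' β) ∧
    (∀ α β γ, α < β → β < γ → γ < omegaOrd k → ρ k α β ≠ ρ k β γ)

/-- The functions `f_i` derived from the ρ-functions: `f_0(α) = α` and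
`f_{i+1}(α_0,…,α_{i+1}) = ρ^{(n-i)}(f_i(α_0,…,α_i), f_i(α_1,…,α_{i+1}))`
(with value `0` if the two arguments coincide).  A tuple `(α_0,…,α_i)` is
represented by a function `v : ℕ → Ordinal` via its first `i + 1` values. -/
noncomputable def fseq (n : ℕ) (ρ : ℕ → Ordinal → Ordinal → Ordinal) :
    ℕ → (ℕ → Ordinal) → Ordinal
  | 0, v => v 0
  | (i + 1), v =>
      if fseq n ρ i v = fseq n ρ i (fun j => v (j + 1)) then 0
      else ρ (n - i) (fseq n ρ i v) (fseq n ρ i (fun j => v (j + 1)))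

/-- Prepending `α` to the tuple `v`. -/
def consFn (α : Ordinal) (v : ℕ → Ordinal) : ℕ → Ordinal :=
  fun j => if j = 0 then α else v (j - 1)


lemma omegaOrd_pos (k : ℕ) : (0:Ordinal) < omegaOrd k := by
  rw [omegaOrd, Cardinal.lt_ord]; simp [Cardinal.aleph_pos]

lemma fseq_lt_omega (n : ℕ) (ρ : ℕ → Ordinal → Ordinal → Ordinal)
    (hρ : IsRhoSystem n ρ) :
    ∀ i, i ≤ n → ∀ v : ℕ → Ordinal, (∀ j, j + 1 ≤ i → v j < v (j + 1)) →
      (∀ j, j ≤ i → v j < omegaOrd n) → fseq n ρ i v < omegaOrd (n - i) := by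
  intro i
  induction i with
  | zero => intro _ v _ hb; simpa [fseq] using hb 0 le_rfl
  | succ i ih =>
    intro hi v hinc hb
    have ha : fseq n ρ i v < omegaOrd (n - i) :=
      ih (le_of_lt (Nat.lt_of_succ_le hi)) v
        (fun j hj => hinc j (le_trans hj (Nat.le_succ i)))
        (fun j hj => hb j (le_trans hj (Nat.le_succ i)))
    have hb' : fseq n ρ i (fun j => v (j + 1)) < omegaOrd (n - i) :=
      ih (le_of_lt (Nat.lt_of_succ_le hi)) (fun j => v (j + 1))
        (fun j hj => hinc (j + 1) (by omega))
        (fun j hj => hb (j + 1) (by omega))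
    rw [fseq]
    split
    · exact omegaOrd_pos _
    · rename_i hne
      obtain ⟨_, h2, _, _, _⟩ := hρ (n - i) (by omega) (by omega)
      have := h2 _ _ ha hb' hne
      have hnat : n - i - 1 = n - (i + 1) := by omega
      rwa [hnat] at this

lemma shift_consFn (α : Ordinal) (v : ℕ → Ordinal) :
    (fun j => consFn α v (j + 1)) = v := by
  funext j; simp [consFn]

/-- If `α, ᾱ < α_0 < … < α_{i-1} < ω_n` satisfy
`f_i(α,α_0,…,α_{i-1}) = f_i(ᾱ,α_0,…,α_{i-1})` and, for every `j < i`, both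
`f_j(α,α_0,…,α_{j-1}) < f_j(α_0,…,α_j)` and `f_j(ᾱ,α_0,…,α_{j-1}) < f_j(α_0,…,α_j)`,
then `α = ᾱ`. -/
theorem stmt4 (n : ℕ) (hn : 1 ≤ n) (ρ : ℕ → Ordinal → Ordinal → Ordinal)
    (hρ : IsRhoSystem n ρ)
    (i : ℕ) (hi : i ≤ n) (α α' : Ordinal) (v : ℕ → Ordinal)
    (hv : ∀ j, j + 1 < i → v j < v (j + 1))
    (hvlt : ∀ j, j < i → v j < omegaOrd n)
    (hα : α < omegaOrd n) (hα' : α' < omegaOrd n)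
    (hαv : 0 < i → α < v 0) (hα'v : 0 < i → α' < v 0)
    (heq : fseq n ρ i (consFn α v) = fseq n ρ i (consFn α' v))
    (hlt : ∀ j, j < i →
      fseq n ρ j (consFn α v) < fseq n ρ j v ∧
      fseq n ρ j (consFn α' v) < fseq n ρ j v) :
    α = α' := by
  induction i with
  | zero => simpa [fseq, consFn] using heq
  | succ i ih =>
    have hia : i < i + 1 := Nat.lt_succ_self i
    have hlti := hlt i hia
    have hne : fseq n ρ i (consFn α v) ≠ fseq n ρ i v := ne_of_lt hlti.1
    have hne' : fseq n ρ i (consFn α' v) ≠ fseq n ρ i v := ne_of_lt hlti.2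
    rw [fseq, fseq, shift_consFn, shift_consFn, if_neg hne, if_neg hne'] at heq
    -- bound on fseq i v
    have hbv : fseq n ρ i v < omegaOrd (n - i) := by
      apply fseq_lt_omega n ρ hρ i (by omega) v
      · intro j hj; exact hv j (by omega)
      · intro j hj; exact hvlt j (by omega)
    obtain ⟨_, _, _, h4, _⟩ := hρ (n - i) (by omega) (by omega)
    by_cases hfe : fseq n ρ i (consFn α v) = fseq n ρ i (consFn α' v)
    · exact ih (by omega) (fun j hj => hv j (by omega))
        (fun j hj => hvlt j (by omega))
        (fun _ => hαv (by omega)) (fun _ => hα'v (by omega)) hfe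
        (fun j hj => hlt j (by omega))
    · exact absurd heq (h4 _ _ _ hlti.1 hlti.2 hbv hfe)
end

section
/- Suppose the Lebesgue measure extends to a total countably additive measure, i.e., there is a countably additive measure μ defined on all subsets of ℝ which agrees with Lebesgue measure on all Lebesgue measurable sets. Then every normalized weakly null sequence (x_α)_{α < 2^{ℵ₀}} of length continuum in a Banach space X contains an infinite unconditional basic subsequence: there exist an infinite set A of indices and a constant K ≥ 1 such that for every finite s ⊆ A, every family of scalars (a_α)_{α∈s}, and every t ⊆ s one has ‖Σ_{α∈t} a_α x_α‖ ≤ K·‖Σ_{α∈s} a_α x_α‖. -/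
/-!
Weak nullity makes every functional vanish at all but countably many `x α`. For a finite set `t`
of indices, countably many functionals of norm at most one norm the span of the `x α`, `α ∈ t`;
together they vanish at `x α` for `α` outside a countable set `S t`. On a set `A` that is free for
`S` (`α ∉ S t` whenever `t ⊆ A` and `α ∈ A \ t`) these functionals do not see the terms of
`∑ α ∈ s, a α • x α` outside `t`, which gives the unconditionality estimate with `K = 1`.

The extension of Lebesgue measure, carried to the index set by a bijection with `ℝ`, is a diffuse
probability measure `M` on all subsets, and such a measure yields an infinite free set: points are
added one at a time, each outside an `M`-null set, keeping every point `AlmostFree` to all depths so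
that the construction never gets stuck. These exceptional sets are null by a Sierpiński-type lemma
(if all sections `{a | R a γ}` are countable, then `M {γ | R a γ} = 0` for all but countably
many `a`), which reduces to Ulam's theorem: an s-finite measure on all subsets of `ω₁` that
vanishes on points is zero.
-/

open Set MeasureTheory Cardinal ENNReal

universe u

section Ulam

variable {W : Type*} [LinearOrder W]

theorem Set.Countable.exists_forall_lt [Uncountable W] (hW : ∀ b : W, (Iio b).Countable)
    {s : Set W} (hs : s.Countable) : ∃ B, ∀ c ∈ s, c < B := by
  have hIic : (⋃ c ∈ s, Iic c).Countable :=
    hs.biUnion fun c _ => Iio_insert (a := c) ▸ (hW c).insert c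
  obtain ⟨B, hB⟩ : (⋃ c ∈ s, Iic c)ᶜ.Nonempty :=
    nonempty_compl.2 fun h => not_countable_univ (h ▸ hIic)
  simp only [mem_compl_iff, mem_iUnion, mem_Iic, not_exists, not_le] at hB
  exact ⟨B, hB⟩

variable [MeasurableSpace W] [DiscreteMeasurableSpace W]

theorem MeasureTheory.Measure.eq_zero_of_countable_Iio (hW : ∀ b : W, (Iio b).Countable)
    (ν : Measure W) [SFinite ν] [NullSingletonClass ν] : ν = 0 := by
  by_contra hν
  have hι : ∀ b : W, ∃ ι : Iio b → ℕ, ι.Injective := fun b =>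
    (countable_iff_exists_injective _).1 (hW b).to_subtype
  choose ι hι using hι
  -- Ulam's matrix: `b ∈ A n ξ` iff `ξ < b` and `ξ` is the `n`-th element of `Iio b`.
  set A : ℕ → W → Set W := fun n ξ => {b | ∃ h : ξ < b, ι b ⟨ξ, h⟩ = n}
  have hrow : ∀ ξ, ⋃ n, A n ξ = Ioi ξ := fun ξ => by
    ext b
    simp only [A, mem_iUnion, mem_ofPred_eq, mem_Ioi]
    exact ⟨fun ⟨_, h, _⟩ => h, fun h => ⟨_, h, rfl⟩⟩
  have hcol : ∀ n, Pairwise (Function.onFun Disjoint (A n)) := fun n ξ ξ' hne =>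
    disjoint_left.2 fun b ⟨h, e⟩ ⟨h', e'⟩ => hne (congrArg Subtype.val (hι b (e.trans e'.symm)))
  have hIoi : ∀ ξ, ν (Ioi ξ) ≠ 0 := fun ξ hξ => by
    have hIic : ν (Iic ξ) = 0 := by
      rw [← Iio_insert]
      exact ((hW ξ).insert ξ).measure_zero ν
    have := measure_union_null hIic hξ
    rw [Iic_union_Ioi] at this
    exact hν (Measure.measure_univ_eq_zero.1 this)
  have hcover : (univ : Set W) ⊆ ⋃ n, {ξ | 0 < ν (A n ξ)} := fun ξ _ => by
    obtain ⟨n, hn⟩ : ∃ n, ν (A n ξ) ≠ 0 := by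
      by_contra! h
      exact hIoi ξ (hrow ξ ▸ measure_iUnion_null h)
    exact mem_iUnion.2 ⟨n, pos_iff_ne_zero.2 hn⟩
  have huniv : (univ : Set W).Countable := (countable_iUnion fun n =>
    Measure.countable_meas_pos_of_disjoint_iUnion (fun _ => .of_discrete) (hcol n)).mono hcover
  exact hν (Measure.measure_univ_eq_zero.1 (huniv.measure_zero ν))

theorem exists_measure_Ioi_eq_zero [Uncountable W] (hW : ∀ b : W, (Iio b).Countable)
    (ν : Measure W) [SFinite ν] : ∃ B, ν (Ioi B) = 0 := by
  have hatoms : {b : W | 0 < ν {b}}.Countable :=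
    Measure.countable_meas_pos_of_disjoint_iUnion (fun _ => .of_discrete)
      fun b c hbc => disjoint_singleton.2 hbc
  obtain ⟨B, hB⟩ := hatoms.exists_forall_lt hW
  have : NullSingletonClass (ν.restrict (Ioi B)) := ⟨fun b => by
    rw [Measure.restrict_apply .of_discrete]
    by_cases hb : B < b
    · exact measure_mono_null inter_subset_left
        (nonpos_iff_eq_zero.1 (not_lt.1 fun h => (hB b h).not_gt hb))
    · rw [singleton_inter_eq_empty.2 (by exact hb), measure_empty]⟩
  have := congrArg (· univ) ((ν.restrict (Ioi B)).eq_zero_of_countable_Iio hW)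
  exact ⟨B, by simpa using this⟩

end Ulam

instance : Uncountable (ℵ₁ : Cardinal.{u}).ord.ToType := by
  rw [← aleph0_lt_mk_iff, mk_ord_toType]; exact aleph0_lt_aleph_one

theorem countable_Iio_aleph_one_ord_toType (b : (ℵ₁ : Cardinal.{u}).ord.ToType) :
    (Iio b).Countable := by
  rw [← le_aleph0_iff_set_countable, ← lt_aleph_one_iff]
  simpa using mk_Iio_lt b

theorem countable_setOf_measure_ne_zero {α : Type u} {β : Type*} [MeasurableSpace β]
    [DiscreteMeasurableSpace β] (M : Measure β) [SFinite M] (R : α → β → Prop)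
    (hR : ∀ γ, {a | R a γ}.Countable) : {a | M {γ | R a γ} ≠ 0}.Countable := by
  by_contra hP
  let W := (ℵ₁ : Cardinal.{u}).ord.ToType
  let _ : MeasurableSpace W := ⊤
  have : DiscreteMeasurableSpace W := ⟨fun _ => trivial⟩
  obtain ⟨φ⟩ : Nonempty (W ↪ {a | M {γ | R a γ} ≠ 0}) := by
    rw [← Cardinal.le_def, mk_ord_toType, aleph_one_le_iff, aleph0_lt_mk_iff]
    exact not_countable_iff.1 hP
  have hsec : ∀ γ, {b : W | R (φ b) γ}.Countable := fun γ =>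
    (hR γ).preimage (Subtype.val_injective.comp φ.injective)
  choose f hf using fun γ => (hsec γ).exists_forall_lt countable_Iio_aleph_one_ord_toType
  obtain ⟨B, hB⟩ := exists_measure_Ioi_eq_zero countable_Iio_aleph_one_ord_toType (M.map f)
  rw [Measure.map_apply .of_discrete .of_discrete] at hB
  exact (φ B).2 (measure_mono_null (fun γ hγ => hf γ B hγ) hB)

theorem Finset.exists_infinite_of_exists_insert {α : Type*} [DecidableEq α]
    {P : Finset α → Prop}
    (hmono : ∀ ⦃F G⦄, F ⊆ G → P G → P F) (h0 : P ∅)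
    (hins : ∀ G, P G → ∃ a ∉ G, P (insert a G)) :
    ∃ A : Set α, A.Infinite ∧ ∀ F : Finset α, ↑F ⊆ A → P F := by
  choose next hnext hP using fun G : {G // P G} => hins G.1 G.2
  let T : ℕ → {G // P G} := fun n => (fun G => ⟨insert (next G) G.1, hP G⟩)^[n] ⟨∅, h0⟩
  have hT : Monotone fun n => (T n).1 := monotone_nat_of_le_succ fun n => by
    simpa only [T, Function.iterate_succ_apply'] using subset_insert _ _
  have hcard : ∀ n, (T n).1.card = n := fun n => by
    induction n with
    | zero => rfl
    | succ n ih =>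
      simp only [T, Function.iterate_succ_apply'] at ih ⊢
      rw [card_insert_of_notMem (hnext _), ih]
  refine ⟨⋃ n, ((T n).1 : Set α), fun hfin => ?_, fun F hF => ?_⟩
  · have := card_le_card (hfin.subset_toFinset.2
      (subset_iUnion (fun n => ((T n).1 : Set α)) (hfin.toFinset.card + 1)))
    rw [hcard] at this
    omega
  · have hdir : Directed (· ⊆ ·) fun n => ((T n).1 : Set α) :=
      Monotone.directed_le fun m n h => coe_subset.2 (hT h)
    obtain ⟨n, hn⟩ := hdir.exists_mem_subset_of_finset_subset_biUnion hF
    exact hmono (coe_subset.1 hn) (T n).2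

section FreeSet

variable {Ω : Type*} [MeasurableSpace Ω] [DecidableEq Ω] (M : Measure Ω) (S : Finset Ω → Set Ω)

/-- `AlmostFree M S k F β` says that for `M`-almost every `γ₁`, almost every `γ₂`, …, almost
every `γₖ`, one has `β ∉ S (F ∪ {γ₁, …, γₖ})`. -/
def AlmostFree : ℕ → Finset Ω → Ω → Prop
  | 0, F, β => β ∉ S F
  | k + 1, F, β => ∀ᵐ γ ∂M, AlmostFree k (insert γ F) β

theorem countable_setOf_not_almostFree [DiscreteMeasurableSpace Ω] [SFinite M]
    (hS : ∀ F, (S F).Countable) (k : ℕ) (F : Finset Ω) :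
    {β | ¬ AlmostFree M S k F β}.Countable := by
  induction k generalizing F with
  | zero => simpa [AlmostFree] using hS F
  | succ k ih =>
    simpa only [AlmostFree, ae_iff] using
      countable_setOf_measure_ne_zero M (fun β γ => ¬ AlmostFree M S k (insert γ F) β)
        fun γ => ih (insert γ F)

def IsAlmostFreeSet (G : Finset Ω) : Prop :=
  ∀ F ⊆ G, ∀ β ∈ G, β ∉ F → ∀ k, AlmostFree M S k F β

variable {M S}

theorem IsAlmostFreeSet.mono {F G : Finset Ω} (hFG : F ⊆ G) (hG : IsAlmostFreeSet M S G) :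
    IsAlmostFreeSet M S F :=
  fun E hE β hβ => hG E (hE.trans hFG) β (hFG hβ)

theorem IsAlmostFreeSet.exists_insert [DiscreteMeasurableSpace Ω] [SFinite M] [NeZero M]
    [NullSingletonClass M] (hS : ∀ F, (S F).Countable) {G : Finset Ω}
    (hG : IsAlmostFreeSet M S G) : ∃ β ∉ G, IsAlmostFreeSet M S (insert β G) := by
  have hnew : ∀ᵐ β ∂M, ∀ F ∈ G.powerset, ∀ k, AlmostFree M S k F β := by
    refine (Finset.eventually_all _).2 fun F _ => ae_all_iff.2 fun k => ?_
    exact ((countable_setOf_not_almostFree M S hS k F).ae_notMem M).mono fun β h => not_not.1 h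
  have hold : ∀ᵐ β ∂M, ∀ F ∈ G.powerset, ∀ β' ∈ G, β' ∉ F → ∀ k,
      AlmostFree M S k (insert β F) β' := by
    refine (Finset.eventually_all _).2 fun F hF => (Finset.eventually_all _).2 fun β' hβ' => ?_
    refine Filter.eventually_imp_distrib_left.2 fun hβ'F => ae_all_iff.2 fun k => ?_
    exact hG F (Finset.mem_powerset.1 hF) β' hβ' hβ'F (k + 1)
  obtain ⟨β, hβG, hβnew, hβold⟩ :=
    ((G.countable_toSet.ae_notMem M).and (hnew.and hold)).exists
  refine ⟨β, hβG, fun F hF b hb hbF k => ?_⟩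
  rcases Finset.mem_insert.1 hb with rfl | hbG
  · exact hβnew F (Finset.mem_powerset.2 ((Finset.subset_insert_iff_of_notMem hbF).1 hF)) k
  by_cases hβF : β ∈ F
  · rw [← Finset.insert_erase hβF]
    exact hβold _ (Finset.mem_powerset.2 (Finset.subset_insert_iff.1 hF)) b hbG
      (fun h => hbF (Finset.mem_of_mem_erase h)) k
  · exact hG F ((Finset.subset_insert_iff_of_notMem hβF).1 hF) b hbG hbF k

end FreeSet

theorem exists_infinite_free {Ω : Type*} [MeasurableSpace Ω] [DiscreteMeasurableSpace Ω]
    (M : Measure Ω) [SFinite M] [NeZero M] [NullSingletonClass M] (S : Finset Ω → Set Ω)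
    (hS : ∀ F, (S F).Countable) :
    ∃ A : Set Ω, A.Infinite ∧ ∀ F : Finset Ω, ↑F ⊆ A → ∀ β ∈ A, β ∉ F → β ∉ S F := by
  classical
  obtain ⟨A, hA, hAfree⟩ := Finset.exists_infinite_of_exists_insert
    (fun _ _ => IsAlmostFreeSet.mono) (fun _ hF β hβ => absurd hβ (Finset.notMem_empty β))
    fun _ hG => hG.exists_insert (M := M) hS
  refine ⟨A, hA, fun F hF β hβ hβF =>
    hAfree (insert β F) ?_ F (Finset.subset_insert _ _) β (Finset.mem_insert_self _ _) hβF 0⟩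
  rw [Finset.coe_insert]
  exact insert_subset hβ hF

theorem exists_probabilityMeasure_of_equiv_real {I : Type*} [MeasurableSpace I]
    [DiscreteMeasurableSpace I] (e : I ≃ ℝ) (μ : Set ℝ → ℝ≥0∞) (hμ0 : μ ∅ = 0)
    (hadd : ∀ f : ℕ → Set ℝ, Pairwise (Function.onFun Disjoint f) →
      μ (⋃ i, f i) = ∑' i, μ (f i))
    (hleb : ∀ s : Set ℝ, MeasurableSet s → μ s = volume s) :
    ∃ M : Measure I, IsProbabilityMeasure M ∧ NullSingletonClass M := by
  let M : Measure I := Measure.ofMeasurable (fun A _ => μ (e '' A ∩ Icc 0 1))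
    (by rw [image_empty, empty_inter, hμ0])
    fun f _ hf => by
      rw [image_iUnion, iUnion_inter]
      exact hadd _ fun i j hij => ((disjoint_image_iff e.injective).2 (hf hij)).mono
        inter_subset_left inter_subset_left
  have hM : ∀ A, M A = μ (e '' A ∩ Icc 0 1) := fun A => Measure.ofMeasurable_apply A .of_discrete
  refine ⟨M, ⟨?_⟩, ⟨fun b => ?_⟩⟩
  · rw [hM, image_univ, e.range_eq_univ, univ_inter, hleb _ measurableSet_Icc, Real.volume_Icc]
    norm_num
  · rw [hM, image_singleton]
    by_cases hb : e b ∈ Icc (0 : ℝ) 1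
    · rw [inter_eq_left.2 (singleton_subset_iff.2 hb), hleb _ (measurableSet_singleton _),
        Real.volume_singleton]
    · rw [singleton_inter_eq_empty.2 hb, hμ0]

theorem countable_support_of_finite_setOf_le_abs {ι : Type*} {u : ι → ℝ}
    (hu : ∀ ε : ℝ, 0 < ε → {i | ε ≤ |u i|}.Finite) : (Function.support u).Countable := by
  refine (countable_iUnion fun n : ℕ => (hu (1 / (n + 1)) (by positivity)).countable).mono
    fun i hi => mem_iUnion.2 ?_
  obtain ⟨n, hn⟩ := exists_nat_one_div_lt (abs_pos.2 hi)
  exact ⟨n, hn.le⟩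

section Norming

variable {X : Type*} [NormedAddCommGroup X] [NormedSpace ℝ X]

theorem TopologicalSpace.IsSeparable.exists_countable_norming {s : Set X} (hs : IsSeparable s) :
    ∃ N : Set (StrongDual ℝ X), N.Countable ∧ (∀ g ∈ N, ‖g‖ ≤ 1) ∧
      ∀ v ∈ s, ∀ c < ‖v‖, ∃ g ∈ N, c < g v := by
  obtain ⟨D, hD, hsD⟩ := hs
  choose g hg1 hgw using fun w : X => exists_dual_vector'' ℝ w
  refine ⟨g '' D, hD.image g, forall_mem_image.2 fun w _ => hg1 w, fun v hv c hc => ?_⟩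
  obtain ⟨w, hwD, hvw⟩ := Metric.mem_closure_iff.1 (hsD hv) ((‖v‖ - c) / 2) (by linarith)
  refine ⟨g w, mem_image_of_mem g hwD, ?_⟩
  have hgvw : |g w (v - w)| ≤ ‖v - w‖ := by
    simpa using ((g w).le_opNorm (v - w)).trans (mul_le_of_le_one_left (norm_nonneg _) (hg1 w))
  have hv : ‖v‖ ≤ ‖w‖ + ‖v - w‖ := norm_le_norm_add_norm_sub' v w
  have hsplit : g w v = ‖w‖ + g w (v - w) := by
    rw [map_sub, hgw, RCLike.ofReal_real_eq_id, id]
    ring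
  rw [dist_eq_norm] at hvw
  linarith [(abs_le.1 hgvw).1]

theorem norm_le_of_forall_norming_apply_eq {N : Set (StrongDual ℝ X)} (hN : ∀ g ∈ N, ‖g‖ ≤ 1)
    {v w : X} (hv : ∀ c < ‖v‖, ∃ g ∈ N, c < g v) (hvw : ∀ g ∈ N, g v = g w) : ‖v‖ ≤ ‖w‖ :=
  le_of_forall_lt fun c hc => by
    obtain ⟨g, hg, hcg⟩ := hv c hc
    calc c < g w := hvw g hg ▸ hcg
      _ ≤ ‖g‖ * ‖w‖ := (le_abs_self _).trans (g.le_opNorm w)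
      _ ≤ ‖w‖ := mul_le_of_le_one_left (norm_nonneg _) (hN g hg)

end Norming

theorem nonempty_equiv_real_of_lt_continuum_ord :
    Nonempty ({α : Ordinal.{u} // α < continuum.ord} ≃ ℝ) := by
  have h : #(Iio continuum.{u}.ord) = 𝔠 := by
    rw [Cardinal.mk_Iio_ordinal, card_ord, lift_continuum]
  refine Cardinal.lift_mk_eq'.1 ?_
  simp only [← mem_Iio, h, mk_real, lift_continuum]

theorem stmt8_general
    (μ : Set ℝ → ENNReal)
    (hμ0 : μ ∅ = 0)
    (hadd : ∀ f : ℕ → Set ℝ, Pairwise (Function.onFun Disjoint f) →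
      μ (⋃ i, f i) = ∑' i, μ (f i))
    (hleb : ∀ s : Set ℝ, MeasurableSet s → μ s = MeasureTheory.volume s)
    (X : Type*) [NormedAddCommGroup X] [NormedSpace ℝ X]
    (x : {α : Ordinal // α < Cardinal.continuum.ord} → X)
    (hweak : ∀ f : X →L[ℝ] ℝ, ∀ ε : ℝ, 0 < ε → {α | ε ≤ |f (x α)|}.Finite) :
    ∃ A : Set {α : Ordinal // α < Cardinal.continuum.ord}, A.Infinite ∧
      ∃ K : ℝ, 1 ≤ K ∧
        ∀ s : Finset {α : Ordinal // α < Cardinal.continuum.ord}, ↑s ⊆ A →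
          ∀ a : {α : Ordinal // α < Cardinal.continuum.ord} → ℝ, ∀ t ⊆ s,
            ‖∑ α ∈ t, a α • x α‖ ≤ K * ‖∑ α ∈ s, a α • x α‖ := by
  obtain ⟨e⟩ := nonempty_equiv_real_of_lt_continuum_ord
  let _ : MeasurableSpace {α : Ordinal // α < continuum.ord} := ⊤
  have : DiscreteMeasurableSpace {α : Ordinal // α < continuum.ord} := ⟨fun _ => trivial⟩
  obtain ⟨M, _, _⟩ := exists_probabilityMeasure_of_equiv_real e μ hμ0 hadd hleb
  choose N hNc hN1 hNnorm using fun t : Finset {α : Ordinal // α < continuum.ord} =>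
    ((t.finite_toSet.image x).isSeparable.span (R := ℝ)).exists_countable_norming
  obtain ⟨A, hA, hAfree⟩ :=
    exists_infinite_free M (fun t => ⋃ g ∈ N t, Function.support (g ∘ x)) fun t =>
      (hNc t).biUnion fun g _ => countable_support_of_finite_setOf_le_abs (hweak g)
  refine ⟨A, hA, 1, le_rfl, fun s hsA a t hts => ?_⟩
  rw [one_mul]
  refine norm_le_of_forall_norming_apply_eq (hN1 t) (hNnorm t _ ?_) fun g hg => ?_
  · exact Submodule.sum_mem _ fun α hα =>
      Submodule.smul_mem _ _ (Submodule.subset_span (mem_image_of_mem x hα))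
  · have hvanish : ∀ α ∈ s \ t, g (a α • x α) = 0 := fun α hα => by
      obtain ⟨hαs, hαt⟩ := Finset.mem_sdiff.1 hα
      have := hAfree t ((Finset.coe_subset.2 hts).trans hsA) α (hsA hαs) hαt
      simp only [mem_iUnion, Function.mem_support, not_exists, not_not] at this
      rw [map_smul, show g (x α) = 0 from this g hg, smul_zero]
    rw [← Finset.sum_sdiff hts, map_add, map_sum g _ (s \ t), Finset.sum_eq_zero hvanish,
      zero_add]

/-- If the Lebesgue measure extends to a countably additive measure defined on all
subsets of `ℝ`, then every normalized weakly null sequence of length continuum in a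
Banach space contains an infinite unconditional basic subsequence. -/
theorem stmt8
    (μ : Set ℝ → ENNReal)
    (hμ0 : μ ∅ = 0)
    (hadd : ∀ f : ℕ → Set ℝ, Pairwise (Function.onFun Disjoint f) →
      μ (⋃ i, f i) = ∑' i, μ (f i))
    (hleb : ∀ s : Set ℝ, MeasurableSet s → μ s = MeasureTheory.volume s)
    (X : Type*) [NormedAddCommGroup X] [NormedSpace ℝ X] [CompleteSpace X]
    (x : {α : Ordinal // α < Cardinal.continuum.ord} → X)
    (hnorm : ∀ α, ‖x α‖ = 1)
    (hweak : ∀ f : X →L[ℝ] ℝ, ∀ ε : ℝ, 0 < ε → {α | ε ≤ |f (x α)|}.Finite) :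
    ∃ A : Set {α : Ordinal // α < Cardinal.continuum.ord}, A.Infinite ∧
      ∃ K : ℝ, 1 ≤ K ∧
        ∀ s : Finset {α : Ordinal // α < Cardinal.continuum.ord}, ↑s ⊆ A →
          ∀ a : {α : Ordinal // α < Cardinal.continuum.ord} → ℝ, ∀ t ⊆ s,
            ‖∑ α ∈ t, a α • x α‖ ≤ K * ‖∑ α ∈ s, a α • x α‖ :=
  stmt8_general μ hμ0 hadd hleb X x hweak
end

section
/- Let κ be a set, μ a countably additive probability measure defined on a σ-algebra of subsets of κ such that every countable subset of κ is measurable with μ-measure 0, and let μⁿ denote the n-fold product measure on κⁿ. Let θ be a function assigning to each finite subset of κ a countable subset of κ. Then for every n ≥ 1, every proper subset I of {0,…,n−1} and every j ∈ {0,…,n−1} \ I, if the set S_{I,j} = {u ∈ κⁿ : u_j ∈ θ({u_i : i ∈ I})} is μⁿ-measurable, then μⁿ(S_{I,j}) = 0. Consequently, if moreover the set of tuples u ∈ κⁿ with pairwise distinct coordinates whose range {u_0,…,u_{n−1}} is not θ-free is μⁿ-measurable and each S_{I,j} is μⁿ-measurable, then that set has μⁿ-measure 0. -/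
open scoped Classical
open MeasureTheory

/-- A finite set `s` is θ-free if `θ(t) ∩ s ⊆ t` for every `t ⊆ s`. -/
def ThetaFree {κ : Type*} (θ : Finset κ → Set κ) (s : Finset κ) : Prop :=
  ∀ t ⊆ s, θ t ∩ ↑s ⊆ (↑t : Set κ)

/-- Let `μ` be a countably additive probability measure on a σ-algebra on `κ` giving
measure zero to countable sets, and let `θ` assign to each finite subset of `κ` a
countable subset of `κ`.  Then for `n ≥ 1` each measurable set
`S_{I,j} = {u ∈ κⁿ : u_j ∈ θ(u''I)}` (for `I ⊊ {0,…,n-1}`, `j ∉ I`) is `μⁿ`-null;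
consequently, if the set of injective tuples whose range is not θ-free is measurable
(and each `S_{I,j}` is), it is `μⁿ`-null as well. -/
theorem stmt9 {κ : Type*} [MeasurableSpace κ] (μ : MeasureTheory.Measure κ)
    [MeasureTheory.IsProbabilityMeasure μ]
    (hcount : ∀ s : Set κ, s.Countable → MeasurableSet s ∧ μ s = 0)
    (θ : Finset κ → Set κ) (hθ : ∀ s, (θ s).Countable)
    (n : ℕ) (hn : 1 ≤ n) :
    (∀ I : Finset (Fin n), I ≠ Finset.univ → ∀ j ∉ I,
      MeasurableSet {u : Fin n → κ | u j ∈ θ (I.image u)} →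
      MeasureTheory.Measure.pi (fun _ : Fin n => μ)
        {u : Fin n → κ | u j ∈ θ (I.image u)} = 0) ∧
    ((∀ I : Finset (Fin n), I ≠ Finset.univ → ∀ j ∉ I,
        MeasurableSet {u : Fin n → κ | u j ∈ θ (I.image u)}) →
      MeasurableSet {u : Fin n → κ |
        Function.Injective u ∧ ¬ ThetaFree θ (Finset.univ.image u)} →
      MeasureTheory.Measure.pi (fun _ : Fin n => μ)
        {u : Fin n → κ | Function.Injective u ∧ ¬ ThetaFree θ (Finset.univ.image u)}
        = 0) := by
  have key : ∀ I : Finset (Fin n), I ≠ Finset.univ → ∀ j ∉ I,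
      MeasurableSet {u : Fin n → κ | u j ∈ θ (I.image u)} →
      MeasureTheory.Measure.pi (fun _ : Fin n => μ)
        {u : Fin n → κ | u j ∈ θ (I.image u)} = 0 := by
    intro I hI j hj hmeas
    set p : Fin n → Prop := fun i => i ≠ j with hp
    set S : Set (Fin n → κ) := {u : Fin n → κ | u j ∈ θ (I.image u)} with hS
    set e := MeasurableEquiv.piEquivPiSubtypeProd (fun _ : Fin n => κ) p with he
    have hmp := MeasureTheory.measurePreserving_piEquivPiSubtypeProd
      (fun _ : Fin n => μ) p
    have hmp' := hmp.symm e
    have hpre : ((Measure.pi fun _ : Subtype p => μ).prod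
        (Measure.pi fun _ : {i // ¬ p i} => μ)) (e.symm ⁻¹' S)
        = Measure.pi (fun _ : Fin n => μ) S :=
      hmp'.measure_preimage hmeas.nullMeasurableSet
    rw [← hpre]
    have hmeas' : MeasurableSet (e.symm ⁻¹' S) := e.symm.measurable hmeas
    rw [Measure.prod_apply hmeas']
    have : ∀ f : {i // p i} → κ,
        (Measure.pi fun _ : {i // ¬ p i} => μ) (Prod.mk f ⁻¹' (e.symm ⁻¹' S)) = 0 := by
      intro f
      -- the finset of values of u over I depends only on f
      have huniq : Unique {i : Fin n // ¬ p i} :=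
        ⟨⟨⟨j, not_not_intro rfl⟩⟩, fun x => Subtype.ext (not_not.mp x.2)⟩
      have hIval : ∀ i (hi : i ∈ I), p i := fun i hi => fun h => hj (h ▸ hi)
      set C : Set κ := θ (I.attach.image (fun i => f ⟨i.1, hIval i.1 i.2⟩)) with hC
      have hesymm : ∀ (fg : ({i // p i} → κ) × ({i // ¬ p i} → κ)) (i : Fin n),
          e.symm fg i = if h : p i then fg.1 ⟨i, h⟩ else fg.2 ⟨i, h⟩ := fun _ _ => rfl
      have hslice : Prod.mk f ⁻¹' (e.symm ⁻¹' S)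
          = (fun g : {i // ¬ p i} → κ => g ⟨j, not_not_intro rfl⟩) ⁻¹' C := by
        ext g
        simp only [Set.mem_preimage, hS, Set.mem_setOf_eq]
        have h1 : e.symm (f, g) j = g ⟨j, not_not_intro rfl⟩ := by
          rw [hesymm]; exact dif_neg (not_not_intro rfl)
        have h2 : I.image (e.symm (f, g))
            = I.attach.image (fun i => f ⟨i.1, hIval i.1 i.2⟩) := by
          ext a
          simp only [Finset.mem_image, Finset.mem_attach, true_and, Subtype.exists]
          constructor
          · rintro ⟨i, hi, rfl⟩
            refine ⟨i, hi, ?_⟩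
            rw [hesymm, dif_pos (hIval i hi)]
          · rintro ⟨i, hi, rfl⟩
            refine ⟨i, hi, ?_⟩
            rw [hesymm, dif_pos (hIval i hi)]
        rw [h1, h2]
      rw [hslice]
      obtain ⟨hCmeas, hCzero⟩ := hcount C (hθ _)
      have hF := MeasureTheory.measurePreserving_funUnique
        (β := κ) μ {i : Fin n // ¬ p i}
      have hdef : (default : {i : Fin n // ¬ p i}) = ⟨j, not_not_intro rfl⟩ :=
        Subtype.ext (not_not.mp (default : {i : Fin n // ¬ p i}).2)
      have : (fun g : {i // ¬ p i} → κ => g ⟨j, not_not_intro rfl⟩) ⁻¹' C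
          = (MeasurableEquiv.funUnique {i : Fin n // ¬ p i} κ) ⁻¹' C := by
        ext g
        simp [MeasurableEquiv.funUnique, Equiv.funUnique, hdef]
      rw [this]
      convert (hF.measure_preimage hCmeas.nullMeasurableSet).trans hCzero using 3
    simp only [this]
    simp
  refine ⟨key, ?_⟩
  intro hmeasAll _hmeasBad
  have hsub : {u : Fin n → κ |
      Function.Injective u ∧ ¬ ThetaFree θ (Finset.univ.image u)}
      ⊆ ⋃ (I : Finset (Fin n)) (_ : I ≠ Finset.univ) (j : Fin n) (_ : j ∉ I),
        {u : Fin n → κ | u j ∈ θ (I.image u)} := by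
    rintro u ⟨hinj, hfree⟩
    simp only [ThetaFree, not_forall] at hfree
    obtain ⟨t, ht, hsub'⟩ := hfree
    rw [Set.not_subset] at hsub'
    obtain ⟨x, ⟨hxθ, hxs⟩, hxt⟩ := hsub'
    simp only [Finset.coe_image, Finset.coe_univ, Set.image_univ, Set.mem_range] at hxs
    obtain ⟨j, rfl⟩ := hxs
    set I : Finset (Fin n) := Finset.univ.filter (fun i => u i ∈ t) with hI
    have hteq : t = I.image u := by
      ext a
      simp only [hI, Finset.mem_image, Finset.mem_filter, Finset.mem_univ, true_and]
      constructor
      · intro ha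
        have := ht ha
        simp only [Finset.mem_image, Finset.mem_univ, true_and] at this
        obtain ⟨i, hi⟩ := this
        exact ⟨i, hi ▸ ha, hi⟩
      · rintro ⟨i, hi, rfl⟩; exact hi
    have hjI : j ∉ I := by
      simp only [hI, Finset.mem_filter, Finset.mem_univ, true_and]
      intro h; exact hxt (by exact_mod_cast h)
    have hIne : I ≠ Finset.univ := fun h => hjI (h ▸ Finset.mem_univ j)
    refine Set.mem_iUnion.2 ⟨I, Set.mem_iUnion.2 ⟨hIne, Set.mem_iUnion.2
      ⟨j, Set.mem_iUnion.2 ⟨hjI, ?_⟩⟩⟩⟩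
    show u j ∈ θ (I.image u)
    rwa [← hteq]
  refine measure_mono_null hsub ?_
  refine measure_iUnion_null fun I => measure_iUnion_null fun hI =>
    measure_iUnion_null fun j => measure_iUnion_null fun hj => ?_
  exact key I hI j hj (hmeasAll I hI j hj)
end

section
/- Let X be a normed space, κ an index set, and (x_α)_{α∈κ} a family of vectors in X. Suppose that for each finite s ⊆ κ a countable set N_s of norm-one continuous linear functionals on X is given such that ‖x‖ = sup{f(x) : f ∈ N_s} for every x in the linear span of {x_α : α ∈ s}. Define θ(s) = {α ∈ κ : there is f ∈ N_s with f(x_α) ≠ 0}. If a finite set s ⊆ κ is θ-free — that is, θ(t) ∩ s ⊆ t for every t ⊆ s — then (x_α)_{α∈s} is suppression-1-unconditional: for every family of scalars (a_α)_{α∈s} and every t ⊆ s, ‖Σ_{α∈t} a_α x_α‖ ≤ ‖Σ_{α∈s} a_α x_α‖. -/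
/-- Given norming countable sets `N_s` of norm-one functionals for the spans of finite
subfamilies of `(x_α)`, any θ-free finite set of indices (for
`θ(s) = {α : ∃ f ∈ N_s, f(x_α) ≠ 0}`) spans a suppression-1-unconditional family. -/
theorem stmt10 (X : Type*) [NormedAddCommGroup X] [NormedSpace ℝ X]
    (κ : Type*) (x : κ → X)
    (Nf : Finset κ → Set (X →L[ℝ] ℝ))
    (hcount : ∀ s, (Nf s).Countable)
    (hone : ∀ s, ∀ f ∈ Nf s, ‖f‖ = 1)
    (hsup : ∀ s : Finset κ, ∀ y ∈ Submodule.span ℝ (x '' ↑s),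
      ‖y‖ = sSup ((fun f : X →L[ℝ] ℝ => f y) '' Nf s))
    (s : Finset κ)
    (hfree : ThetaFree (fun t => {α | ∃ f ∈ Nf t, f (x α) ≠ 0}) s) :
    ∀ a : κ → ℝ, ∀ t ⊆ s,
      ‖∑ α ∈ t, a α • x α‖ ≤ ‖∑ α ∈ s, a α • x α‖ := by
  intro a t ht
  have hy : (∑ α ∈ t, a α • x α) ∈ Submodule.span ℝ (x '' ↑t) :=
    Submodule.sum_mem _ fun α hα =>
      Submodule.smul_mem _ _ (Submodule.subset_span ⟨α, by simpa using hα, rfl⟩)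
  rw [hsup t _ hy]
  apply Real.sSup_le
  · rintro _ ⟨f, hf, rfl⟩
    have hzero : ∀ α ∈ s, α ∉ t → f (x α) = 0 := by
      intro α hαs hαt
      by_contra h
      exact hαt (hfree t ht ⟨⟨f, hf, h⟩, hαs⟩)
    have heq : f (∑ α ∈ t, a α • x α) = f (∑ α ∈ s, a α • x α) := by
      rw [map_sum, map_sum]
      exact Finset.sum_subset ht (fun α hαs hαt => by simp [hzero α hαs hαt])
    calc f (∑ α ∈ t, a α • x α) = f (∑ α ∈ s, a α • x α) := heq
      _ ≤ ‖f (∑ α ∈ s, a α • x α)‖ := le_abs_self _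
      _ ≤ ‖f‖ * ‖∑ α ∈ s, a α • x α‖ := f.le_opNorm _
      _ = ‖∑ α ∈ s, a α • x α‖ := by rw [hone t f hf, one_mul]
  · exact norm_nonneg _
end

section
/- Let κ be an infinite cardinal. The following are equivalent: (1) κ is ω-Erdős, i.e., for every function c from the finite subsets of κ into {0,1} there is an infinite H ⊆ κ such that for every n ∈ ℕ the function c is constant on the n-element subsets of H; (2) there is no family F of finite subsets of κ that is simultaneously hereditary (closed under subsets), compact (closed as a subset of 2^κ with the product topology), and large (for every infinite A ⊆ κ and every n ∈ ℕ some n-element subset of A belongs to F). -/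
open Filter Set Finset

attribute [local instance] Classical.propDecidable

noncomputable section Stmt13Aux

variable (c : Finset ℕ → Bool) (N : ℕ)

/-- Iterated ultrafilter limit color: the color obtained by adding `m` generic points to `s`. -/
noncomputable def stmt13L : ℕ → Finset ℕ → Bool
  | 0, s => c s
  | m + 1, s => if {x | stmt13L m (insert x s) = true} ∈ hyperfilter ℕ then true else false

lemma stmt13L_mem (m : ℕ) (s : Finset ℕ) :
    {x | stmt13L c m (insert x s) = stmt13L c (m + 1) s} ∈ hyperfilter ℕ := by
  by_cases h : {x | stmt13L c m (insert x s) = true} ∈ hyperfilter ℕ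
  · simpa [stmt13L, h] using h
  · rw [← Ultrafilter.compl_mem_iff_notMem] at h
    have he : {x | stmt13L c m (insert x s) = true}ᶜ
        = {x | stmt13L c m (insert x s) = stmt13L c (m + 1) s} := by
      ext x
      simp only [Set.mem_compl_iff, Set.mem_setOf_eq, stmt13L]
      rw [if_neg (by rwa [← Ultrafilter.compl_mem_iff_notMem])]
      simp
    rwa [he] at h

/-- The "good" set of next points for the recursive construction. -/
def stmt13T (t : Finset ℕ) : Set ℕ :=
  {x | (∀ y ∈ t, y < x) ∧
    ∀ s ∈ t.powerset, ∀ m ∈ Finset.range N, stmt13L c m (insert x s) = stmt13L c (m + 1) s}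

lemma stmt13T_mem (t : Finset ℕ) : stmt13T c N t ∈ hyperfilter ℕ := by
  have h1 : ∀ᶠ x in (hyperfilter ℕ : Filter ℕ), ∀ y ∈ t, y < x := by
    rw [Finset.eventually_all]
    intro y _
    apply hyperfilter_le_cofinite
    rw [Filter.mem_cofinite]
    have : {x | y < x}ᶜ ⊆ Set.Iic y := by
      intro x hx
      simp only [Set.mem_compl_iff, Set.mem_setOf_eq, not_lt] at hx
      exact hx
    exact (Set.finite_Iic y).subset this
  have h2 : ∀ᶠ x in (hyperfilter ℕ : Filter ℕ), ∀ s ∈ t.powerset, ∀ m ∈ Finset.range N,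
      stmt13L c m (insert x s) = stmt13L c (m + 1) s := by
    rw [Finset.eventually_all]
    intro s _
    rw [Finset.eventually_all]
    intro m _
    exact stmt13L_mem c m s
  exact h1.and h2

/-- The chosen next point. -/
def stmt13pick (t : Finset ℕ) : ℕ :=
  (Ultrafilter.nonempty_of_mem (stmt13T_mem c N t)).some

lemma stmt13pick_mem (t : Finset ℕ) : stmt13pick c N t ∈ stmt13T c N t :=
  Set.Nonempty.some_mem _

lemma stmt13pick_notMem (t : Finset ℕ) : stmt13pick c N t ∉ t := fun h =>
  lt_irrefl _ ((stmt13pick_mem c N t).1 _ h)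

/-- The increasing sequence of finite approximations to the homogeneous set. -/
def stmt13seq : ℕ → Finset ℕ
  | 0 => ∅
  | k + 1 => insert (stmt13pick c N (stmt13seq k)) (stmt13seq k)

lemma stmt13seq_card (k : ℕ) : (stmt13seq c N k).card = k := by
  induction k with
  | zero => rfl
  | succ k ih =>
    rw [stmt13seq, Finset.card_insert_of_notMem (stmt13pick_notMem c N _), ih]

lemma stmt13seq_mono {k l : ℕ} (h : k ≤ l) : stmt13seq c N k ⊆ stmt13seq c N l := by
  induction l with
  | zero => rw [Nat.le_zero.mp h]
  | succ l ih =>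
    rcases Nat.le_succ_iff.mp h with h' | h'
    · exact (ih h').trans (Finset.subset_insert _ _)
    · rw [h']

lemma stmt13seq_lt {k l : ℕ} (h : k ≤ l) :
    ∀ y ∈ stmt13seq c N l, y ∉ stmt13seq c N k → ∀ z ∈ stmt13seq c N k, z < y := by
  induction l with
  | zero =>
    intro y hy
    simp [stmt13seq] at hy
  | succ l ih =>
    rcases Nat.le_succ_iff.mp h with h' | h'
    · intro y hy hyk z hz
      rw [stmt13seq, Finset.mem_insert] at hy
      rcases hy with rfl | hy
      · exact (stmt13pick_mem c N _).1 z (stmt13seq_mono c N h' hz)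
      · exact ih h' y hy hyk z hz
    · subst h'
      intro y hy hyk
      exact absurd hy hyk

/-- The homogeneous set. -/
def stmt13H : Set ℕ := ⋃ k, ↑(stmt13seq c N k)

lemma stmt13H_infinite : (stmt13H c N).Infinite := by
  intro hF
  have hsub : ∀ k, stmt13seq c N k ⊆ hF.toFinset := by
    intro k x hx
    rw [Set.Finite.mem_toFinset]
    exact Set.mem_iUnion.mpr ⟨k, hx⟩
  have := Finset.card_le_card (hsub (hF.toFinset.card + 1))
  rw [stmt13seq_card] at this
  omega

lemma stmt13key : ∀ n : ℕ, ∀ u : Finset ℕ, u.card = n → ↑u ⊆ stmt13H c N →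
    ∀ m, m + u.card ≤ N → stmt13L c m u = stmt13L c (m + u.card) ∅ := by
  intro n
  induction n with
  | zero =>
    intro u hcard _ m _
    obtain rfl := Finset.card_eq_zero.mp hcard
    simp
  | succ n ih =>
    intro u hcard hu m hm
    have hne : u.Nonempty := Finset.card_pos.mp (by omega)
    set x := u.max' hne with hxdef
    have hxu : x ∈ u := u.max'_mem hne
    have hxH : x ∈ stmt13H c N := hu hxu
    have hex : ∃ k, x ∈ stmt13seq c N (k + 1) := by
      obtain ⟨j, hj⟩ := Set.mem_iUnion.mp hxH
      cases j with
      | zero => simp [stmt13seq] at hj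
      | succ j => exact ⟨j, hj⟩
    set k := Nat.find hex with hkdef
    have hxk1 : x ∈ stmt13seq c N (k + 1) := Nat.find_spec hex
    have hxk : x ∉ stmt13seq c N k := by
      cases hk : k with
      | zero => simp [stmt13seq]
      | succ j =>
        exact Nat.find_min hex (m := j) (by omega)
    have hxpick : x = stmt13pick c N (stmt13seq c N k) := by
      rw [stmt13seq, Finset.mem_insert] at hxk1
      tauto
    set u' := u.erase x with hu'def
    have hu'card : u'.card = n := by
      rw [hu'def, Finset.card_erase_of_mem hxu, hcard]
      omega
    have hu'H : ↑u' ⊆ stmt13H c N := fun y hy => hu (Finset.erase_subset _ _ hy)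
    have hu'sub : u' ⊆ stmt13seq c N k := by
      intro y hy
      have hyu : y ∈ u := Finset.erase_subset _ _ hy
      have hyx : y < x := lt_of_le_of_ne (u.le_max' y hyu) (Finset.ne_of_mem_erase hy)
      have hyH : y ∈ stmt13H c N := hu hyu
      obtain ⟨l, hl⟩ := Set.mem_iUnion.mp hyH
      have hyk1 : y ∈ stmt13seq c N (k + 1) := by
        by_contra hyn
        rcases le_or_gt l (k + 1) with h' | h'
        · exact hyn (stmt13seq_mono c N h' hl)
        · exact absurd (stmt13seq_lt c N h'.le y hl hyn x hxk1) (by omega)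
      rw [stmt13seq, ← hxpick, Finset.mem_insert] at hyk1
      rcases hyk1 with rfl | hyk1
      · exact absurd rfl (Finset.ne_of_mem_erase hy)
      · exact hyk1
    have hmN : m < N := by omega
    have hstep : stmt13L c m (insert x u') = stmt13L c (m + 1) u' := by
      have := (stmt13pick_mem c N (stmt13seq c N k)).2 u'
        (Finset.mem_powerset.mpr hu'sub) m (Finset.mem_range.mpr hmN)
      rwa [← hxpick] at this
    have hins : insert x u' = u := Finset.insert_erase hxu
    have hih := ih u' hu'card hu'H (m + 1) (by omega)
    have harith : m + 1 + u'.card = m + u.card := by omega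
    calc stmt13L c m u = stmt13L c m (insert x u') := by rw [hins]
      _ = stmt13L c (m + 1) u' := hstep
      _ = stmt13L c (m + 1 + u'.card) ∅ := hih
      _ = stmt13L c (m + u.card) ∅ := by rw [harith]

/-- Bounded infinite Ramsey theorem on ℕ: there is an infinite set on which the coloring
is constant on `j`-element subsets for every `j ≤ N` simultaneously. -/
theorem stmt13ramseyNat : ∃ H : Set ℕ, H.Infinite ∧ ∀ u v : Finset ℕ, ↑u ⊆ H → ↑v ⊆ H →
    u.card = v.card → u.card ≤ N → c u = c v := by
  refine ⟨stmt13H c N, stmt13H_infinite c N, fun u v hu hv hcard hle => ?_⟩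
  have h1 := stmt13key c N u.card u rfl hu 0 (by omega)
  have h2 := stmt13key c N v.card v rfl hv 0 (by omega)
  simp only [stmt13L, Nat.zero_add] at h1 h2
  rw [h1, h2, hcard]

/-- Bounded infinite Ramsey inside any infinite subset of any type. -/
theorem stmt13ramsey {κ : Type*} (c : Finset κ → Bool) (A : Set κ) (hA : A.Infinite) (N : ℕ) :
    ∃ B : Set κ, B ⊆ A ∧ B.Infinite ∧ ∀ u v : Finset κ, ↑u ⊆ B → ↑v ⊆ B →
      u.card = v.card → u.card ≤ N → c u = c v := by
  classical
  let f : ℕ ↪ κ := (hA.natEmbedding A).trans (Function.Embedding.subtype _)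
  have hfA : ∀ n, f n ∈ A := fun n => (hA.natEmbedding A n).2
  obtain ⟨H, hHinf, hHhom⟩ := stmt13ramseyNat (fun t => c (t.map f)) N
  refine ⟨f '' H, ?_, hHinf.image f.injective.injOn, ?_⟩
  · rintro _ ⟨n, -, rfl⟩; exact hfA n
  · intro u v hu hv hcard hle
    have hpre : ∀ w : Finset κ, ↑w ⊆ f '' H →
        ∃ w₀ : Finset ℕ, ↑w₀ ⊆ H ∧ w₀.map f = w := by
      intro w hw
      refine ⟨w.preimage f f.injective.injOn, ?_, ?_⟩
      · intro b hb
        simp only [Finset.coe_preimage, Set.mem_preimage] at hb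
        obtain ⟨n, hnH, hnf⟩ := hw hb
        rwa [← f.injective hnf]
      · ext a
        simp only [Finset.mem_map, Finset.mem_preimage]
        constructor
        · rintro ⟨b, hb, rfl⟩; exact hb
        · intro ha
          obtain ⟨n, -, rfl⟩ := hw ha
          exact ⟨n, ha, rfl⟩
    obtain ⟨u₀, hu₀H, hu₀⟩ := hpre u hu
    obtain ⟨v₀, hv₀H, hv₀⟩ := hpre v hv
    have hcard' : u₀.card = v₀.card := by
      rw [← Finset.card_map f, ← Finset.card_map f, hu₀, hv₀, hcard]
    have := hHhom u₀ v₀ hu₀H hv₀H hcard'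
      (by rw [← Finset.card_map f, hu₀]; exact hcard ▸ hle)
    simpa [hu₀, hv₀] using this

end Stmt13Aux

/-- An infinite cardinal (here, an infinite type) `κ` is ω-Erdős — every 2-coloring of
its finite subsets has an infinite homogeneous set — if and only if there is no
hereditary, compact (closed in `2^κ`) and large family of finite subsets of `κ`. -/
theorem stmt13 (κ : Type*) [Infinite κ] :
    (∀ c : Finset κ → Bool, ∃ H : Set κ, H.Infinite ∧
      ∀ s t : Finset κ, ↑s ⊆ H → ↑t ⊆ H → s.card = t.card → c s = c t) ↔
    ¬ ∃ F : Set (Finset κ),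
        (∀ s ∈ F, ∀ t ⊆ s, t ∈ F) ∧
        IsClosed {f : κ → Bool | ∃ s ∈ F, ∀ a, f a = true ↔ a ∈ s} ∧
        (∀ A : Set κ, A.Infinite → ∀ n : ℕ, ∃ s ∈ F, ↑s ⊆ A ∧ s.card = n) := by
  classical
  constructor
  · -- ω-Erdős ⇒ no hereditary compact large family
    rintro hErdos ⟨F, hHer, hClosed, hLarge⟩
    obtain ⟨H, hHinf, hHhom⟩ := hErdos (fun s => decide (s ∈ F))
    -- every finite subset of H is in F
    have hallF : ∀ s : Finset κ, ↑s ⊆ H → s ∈ F := by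
      intro s hs
      obtain ⟨t, htF, htH, htcard⟩ := hLarge H hHinf s.card
      have := hHhom s t hs htH htcard.symm
      simp only [decide_eq_decide] at this
      exact this.mpr htF
    -- the characteristic function of H is a limit of characteristic functions of members of F
    set S := {f : κ → Bool | ∃ s ∈ F, ∀ a, f a = true ↔ a ∈ s} with hSdef
    set fH : κ → Bool := fun a => decide (a ∈ H) with hfHdef
    set g : Finset κ → (κ → Bool) := fun E a => decide (a ∈ E ∧ a ∈ H) with hgdef
    have hgS : ∀ E, g E ∈ S := by
      intro E
      refine ⟨E.filter (fun a => a ∈ H), hallF _ (fun a ha => (Finset.mem_filter.mp ha).2), ?_⟩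
      intro a
      simp [g, Finset.mem_filter]
    have htend : Filter.Tendsto g Filter.atTop (nhds fH) := by
      rw [tendsto_pi_nhds]
      intro a
      rw [nhds_discrete Bool, Filter.tendsto_pure]
      refine Filter.eventually_atTop.mpr ⟨{a}, fun E hE => ?_⟩
      have haE : a ∈ E := hE (Finset.mem_singleton_self a)
      simp [g, fH, haE]
    have : fH ∈ S := hClosed.mem_of_tendsto htend (Filter.Eventually.of_forall hgS)
    obtain ⟨s, -, hsf⟩ := this
    apply hHinf
    apply (s : Set κ).toFinite.subset
    intro a ha
    exact (hsf a).mp (by simp [fH, ha])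
  · -- no hereditary compact large family ⇒ ω-Erdős
    intro hnF c
    by_contra hc
    push_neg at hc
    set F : Set (Finset κ) :=
      {s | ∀ u v : Finset κ, u ⊆ s → v ⊆ s → u.card = v.card → c u = c v} with hFdef
    apply hnF
    refine ⟨F, ?_, ?_, ?_⟩
    · intro s hs t hts u v hu hv hcard
      exact hs u v (hu.trans hts) (hv.trans hts) hcard
    · -- closedness
      apply isClosed_of_closure_subset
      intro f hf
      have hkey : ∀ E : Finset κ, ∃ s ∈ F, ∀ a ∈ E, (f a = true ↔ a ∈ s) := by
        intro E
        have hopen : IsOpen {g : κ → Bool | ∀ a ∈ E, g a = f a} := by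
          have heq : {g : κ → Bool | ∀ a ∈ E, g a = f a}
              = ⋂ a ∈ E, (fun g : κ → Bool => g a) ⁻¹' {f a} := by
            ext g; simp
          rw [heq]
          exact isOpen_biInter_finset fun a _ =>
            (continuous_apply a).isOpen_preimage _ (isOpen_discrete _)
        have hfmem : f ∈ {g : κ → Bool | ∀ a ∈ E, g a = f a} := fun a _ => rfl
        obtain ⟨g, hg1, hg2⟩ := mem_closure_iff.mp hf _ hopen hfmem
        obtain ⟨s, hsF, hs⟩ := hg2
        exact ⟨s, hsF, fun a ha => by rw [← hg1 a ha]; exact hs a⟩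
      set A := {a : κ | f a = true} with hAdef
      have hsubF : ∀ t : Finset κ, ↑t ⊆ A → t ∈ F := by
        intro t ht
        obtain ⟨s, hsF, hs⟩ := hkey t
        have hts : t ⊆ s := fun a ha => (hs a ha).mp (ht ha)
        exact fun u v hu hv hcard => hsF u v (hu.trans hts) (hv.trans hts) hcard
      have hAfin : A.Finite := by
        by_contra hAinf
        obtain ⟨s, t, hsA, htA, hcard, hne⟩ := hc A hAinf
        apply hne
        have huv : s ∪ t ∈ F := by
          apply hsubF
          rw [Finset.coe_union]
          exact Set.union_subset hsA htA
        exact huv s t Finset.subset_union_left Finset.subset_union_right hcard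
      refine ⟨hAfin.toFinset, hsubF _ (by simp), fun a => ?_⟩
      rw [Set.Finite.mem_toFinset]
      exact Iff.rfl
    · -- largeness via Ramsey
      intro A hA n
      obtain ⟨B, hBA, hBinf, hBhom⟩ := stmt13ramsey c A hA n
      obtain ⟨s, hsB, hscard⟩ := hBinf.exists_subset_card_eq n
      refine ⟨s, ?_, hsB.trans hBA, hscard⟩
      intro u v hu hv hcard
      exact hBhom u v ((Finset.coe_subset.mpr hu).trans hsB)
        ((Finset.coe_subset.mpr hv).trans hsB) hcard
        (hcard ▸ (hscard ▸ Finset.card_le_card hv))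
end

section
/- Let κ be a cardinal such that for every function c from the finite subsets of κ into a set of cardinality at most 2^{ℵ₀} there is an infinite H ⊆ κ with c constant on the n-element subsets of H for every n ∈ ℕ. Then every normalized separated sequence (x_α)_{α<κ} in a Banach space X — normalized meaning ‖x_α‖ = 1 for all α, separated meaning there is δ > 0 with ‖x_α − x_β‖ ≥ δ for all α ≠ β — has an infinite 1-subsymmetric subsequence: there is an infinite A ⊆ κ such that for any two finite subsets s, t ⊆ A with |s| = |t| = m and any scalars (a_i)_{i<m}, ‖Σ_{i<m} a_i x_{s(i)}‖ = ‖Σ_{i<m} a_i x_{t(i)}‖, where s(i) and t(i) denote the i-th elements of s and t in increasing order. -/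
/-- If `κ` is ω-Erdős with continuum many colors — every coloring of the finite
subsets of `κ` into a set of cardinality at most `2^ℵ₀` has an infinite homogeneous
set — then every normalized separated `κ`-sequence in a Banach space has an infinite
1-subsymmetric subsequence. -/
theorem stmt14 (κ : Cardinal)
    (herd : ∀ (C : Type) (_ : Cardinal.mk C ≤ Cardinal.continuum)
        (c : Finset {α : Ordinal // α < κ.ord} → C),
      ∃ H : Set {α : Ordinal // α < κ.ord}, H.Infinite ∧
        ∀ s t : Finset {α : Ordinal // α < κ.ord},
          ↑s ⊆ H → ↑t ⊆ H → s.card = t.card → c s = c t)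
    (X : Type*) [NormedAddCommGroup X] [NormedSpace ℝ X] [CompleteSpace X]
    (x : {α : Ordinal // α < κ.ord} → X)
    (hnorm : ∀ α, ‖x α‖ = 1)
    (δ : ℝ) (hδ : 0 < δ)
    (hsep : ∀ α β, α ≠ β → δ ≤ ‖x α - x β‖) :
    ∃ A : Set {α : Ordinal // α < κ.ord}, A.Infinite ∧
      ∀ s t : Finset {α : Ordinal // α < κ.ord}, ↑s ⊆ A → ↑t ⊆ A →
        ∀ h : s.card = t.card, ∀ a : Fin s.card → ℝ,
          ‖∑ i, a i • x (s.orderEmbOfFin rfl i)‖ =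
            ‖∑ i, a i • x (t.orderEmbOfFin h.symm i)‖ := by
  classical
  -- the color type: countably many rational tuples, each mapped to a real
  set C := ((Σ n : ℕ, (Fin n → ℚ)) → ℝ) with hC
  have hcard : Cardinal.mk C ≤ Cardinal.continuum := by
    rw [hC, Cardinal.mk_arrow]
    simp only [Cardinal.lift_id, Cardinal.mk_real]
    calc Cardinal.continuum ^ Cardinal.mk (Σ n : ℕ, (Fin n → ℚ))
        ≤ Cardinal.continuum ^ Cardinal.aleph0 :=
          Cardinal.power_le_power_left Cardinal.continuum_ne_zero
            (Cardinal.mk_le_aleph0)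
      _ = Cardinal.continuum := Cardinal.continuum_power_aleph0
  -- the coloring
  set c : Finset {α : Ordinal // α < κ.ord} → C := fun s p =>
    if h : s.card = p.1 then ‖∑ i : Fin p.1, (p.2 i : ℝ) • x (s.orderEmbOfFin h i)‖
    else 0 with hc
  obtain ⟨H, hHinf, hHhom⟩ := herd C hcard c
  refine ⟨H, hHinf, ?_⟩
  intro s t hs ht h a
  have hom := hHhom s t hs ht h
  -- the two norm functions of real coefficients agree on rational tuples
  set f : (Fin s.card → ℝ) → ℝ :=
    fun b => ‖∑ i, b i • x (s.orderEmbOfFin rfl i)‖ with hf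
  set g : (Fin s.card → ℝ) → ℝ :=
    fun b => ‖∑ i, b i • x (t.orderEmbOfFin h.symm i)‖ with hg
  have hfc : Continuous f := by
    apply continuous_norm.comp
    exact continuous_finset_sum _ fun i _ => (continuous_apply i).smul continuous_const
  have hgc : Continuous g := by
    apply continuous_norm.comp
    exact continuous_finset_sum _ fun i _ => (continuous_apply i).smul continuous_const
  have hdense : Dense (Set.pi Set.univ fun _ : Fin s.card =>
      Set.range ((↑) : ℚ → ℝ)) :=
    dense_pi Set.univ fun _ _ => Rat.denseRange_cast
  have heq : f = g := by
    refine hfc.ext_on hdense hgc ?_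
    intro b hb
    choose q hq using fun i => hb i (Set.mem_univ i)
    have e1 : c s ⟨s.card, q⟩ =
        ‖∑ i, (q i : ℝ) • x (s.orderEmbOfFin rfl i)‖ := dif_pos rfl
    have e2 : c t ⟨s.card, q⟩ =
        ‖∑ i, (q i : ℝ) • x (t.orderEmbOfFin h.symm i)‖ := dif_pos h.symm
    have := congrFun hom ⟨s.card, q⟩
    rw [e1, e2] at this
    simp only [hf, hg]
    have hbq : b = fun i => (q i : ℝ) := funext fun i => (hq i).symm
    rw [hbq]
    exact this
  simpa [hf, hg] using congrFun heq a
end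

section
/- Let κ be an infinite cardinal and let F be a family of finite subsets of κ that is hereditary (closed under subsets), compact (closed as a subset of 2^κ with the product topology), large (for every infinite A ⊆ κ and every n ∈ ℕ some n-element subset of A belongs to F), and contains all singletons. Define a norm on c₀₀(κ) (finitely supported real functions on κ) by ‖x‖_F = sup{ |Σ_{γ∈s} x(γ)| : s ∈ F }. Then the unit vectors (u_γ)_{γ<κ} in (c₀₀(κ), ‖·‖_F) satisfy: (i) ‖u_γ‖_F = 1 for every γ; (ii) the sequence is weakly null: for every ‖·‖_F-bounded linear functional f on c₀₀(κ) and every ε > 0 the set {γ : |f(u_γ)| ≥ ε} is finite; and (iii) no infinite subsequence is subsymmetric: for every infinite A ⊆ κ and every constant K ≥ 1 there exist finite sets s, t ⊆ A with |s| = |t| = m and scalars (a_i)_{i<m} with ‖Σ_{i<m} a_i u_{t(i)}‖_F > K·‖Σ_{i<m} a_i u_{s(i)}‖_F, where s(i), t(i) denote the i-th elements of s, t in increasing order. -/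
/-- The Schreier-type norm on `c₀₀` determined by a family `F` of finite sets:
`‖x‖_F = sup { |Σ_{γ∈s} x(γ)| : s ∈ F }`. -/
noncomputable def normF {ι : Type*} (F : Set (Finset ι)) (x : ι →₀ ℝ) : ℝ :=
  sSup ((fun s : Finset ι => |∑ γ ∈ s, x γ|) '' F)

/-!
Compactness of `F` forbids infinite strictly increasing chains in `F`, so "`a ∈ F` properly
extends `b`" is a well-founded relation and every finite set has an ordinal rank. By induction on
this rank (repeated averaging, as in Pták's lemma) every infinite `A` carries a finitely supported
probability vector `λ` with `∑_{γ ∈ w} λ γ < δ` for all `w ∈ F`, i.e. `‖λ‖_F ≤ δ`. A bounded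
functional that is `≥ ε` on infinitely many `u_γ` would be `≥ ε` on such a `λ`, which gives (ii);
transporting `λ` onto a set `t ∈ F` of the same size gives a vector of norm `≥ 1`, which
gives (iii).
-/

section

variable {ι : Type*} {F : Set (Finset ι)}

theorem normF_bddAbove (F : Set (Finset ι)) (x : ι →₀ ℝ) :
    BddAbove ((fun s : Finset ι => |∑ γ ∈ s, x γ|) '' F) := by
  classical
  refine ⟨∑ γ ∈ x.support, |x γ|, ?_⟩
  rintro - ⟨s, -, rfl⟩
  calc |∑ γ ∈ s, x γ| ≤ ∑ γ ∈ s, |x γ| := Finset.abs_sum_le_sum_abs _ _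
    _ ≤ ∑ γ ∈ s ∪ x.support, |x γ| :=
      Finset.sum_le_sum_of_subset_of_nonneg Finset.subset_union_left fun _ _ _ => abs_nonneg _
    _ = ∑ γ ∈ x.support, |x γ| :=
      (Finset.sum_subset Finset.subset_union_right fun γ _ hγ => by
        rw [Finsupp.notMem_support_iff.1 hγ, abs_zero]).symm

theorem abs_sum_le_normF {s : Finset ι} (hs : s ∈ F) (x : ι →₀ ℝ) :
    |∑ γ ∈ s, x γ| ≤ normF F x :=
  le_csSup (normF_bddAbove F x) ⟨s, hs, rfl⟩

theorem normF_le {x : ι →₀ ℝ} {c : ℝ} (hc : 0 ≤ c) (h : ∀ s ∈ F, |∑ γ ∈ s, x γ| ≤ c) :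
    normF F x ≤ c :=
  Real.sSup_le (by rintro - ⟨s, hs, rfl⟩; exact h s hs) hc

theorem normF_nonneg (x : ι →₀ ℝ) : 0 ≤ normF F x :=
  Real.sSup_nonneg (by rintro - ⟨s, -, rfl⟩; exact abs_nonneg _)

theorem normF_single_one {γ : ι} (hγ : {γ} ∈ F) :
    normF F (Finsupp.single γ 1) = 1 := by
  classical
  refine le_antisymm (normF_le zero_le_one fun s _ => ?_) ?_
  · simp only [Finsupp.single_apply, Finset.sum_ite_eq]
    split_ifs <;> norm_num
  · simpa using abs_sum_le_normF hγ (Finsupp.single γ 1)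

theorem sum_le_sum_support_of_nonneg {lam : ι →₀ ℝ} (hlam : 0 ≤ lam) (w : Finset ι) :
    ∑ γ ∈ w, lam γ ≤ lam.sum fun _ c => c := by
  classical
  calc ∑ γ ∈ w, lam γ ≤ ∑ γ ∈ w ∪ lam.support, lam γ :=
        Finset.sum_le_sum_of_subset_of_nonneg Finset.subset_union_left fun γ _ _ => hlam γ
    _ = ∑ γ ∈ lam.support, lam γ :=
        (Finset.sum_subset Finset.subset_union_right fun γ _ hγ =>
          Finsupp.notMem_support_iff.1 hγ).symm

theorem apply_eq_sum_mul_apply_single (f : (ι →₀ ℝ) →ₗ[ℝ] ℝ) (x : ι →₀ ℝ) :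
    f x = x.sum fun γ c => c * f (Finsupp.single γ 1) := by
  conv_lhs => rw [← Finsupp.sum_single x]
  rw [map_finsuppSum]
  refine Finsupp.sum_congr fun γ _ => ?_
  rw [← Finsupp.smul_single_one, map_smul, smul_eq_mul]

theorem Finset.sum_orderEmbOfFin [LinearOrder ι] {M : Type*} [AddCommMonoid M] (s : Finset ι)
    (φ : ι → M) : ∑ i, φ (s.orderEmbOfFin rfl i) = ∑ γ ∈ s, φ γ := by
  conv_rhs => rw [← s.map_orderEmbOfFin_univ rfl, Finset.sum_map]
  rfl

theorem sum_apply_sum_smul_single {β : Type*} (I : Finset β) (a : β → ℝ) {g : β → ι}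
    {t : Finset ι} (hg : ∀ i ∈ I, g i ∈ t) :
    ∑ γ ∈ t, (∑ i ∈ I, a i • Finsupp.single (g i) (1 : ℝ)) γ = ∑ i ∈ I, a i := by
  classical
  simp only [Finsupp.finsetSum_apply, Finsupp.smul_apply, Finsupp.single_apply, smul_eq_mul]
  rw [Finset.sum_comm]
  exact Finset.sum_congr rfl fun i hi => by simp [hg i hi]

def ProperExtensionIn (F : Set (Finset ι)) (a b : Finset ι) : Prop := a ∈ F ∧ b ⊂ a

open Filter Topology in
theorem wellFounded_properExtensionIn_of_isClosed
    (hF : IsClosed {f : ι → Bool | ∃ s ∈ F, ∀ a, f a = true ↔ a ∈ s}) :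
    WellFounded (ProperExtensionIn F) := by
  classical
  refine wellFounded_iff_isEmpty_descending_chain.2 ⟨fun ⟨g, hg⟩ => ?_⟩
  have hmono : Monotone g := monotone_nat_of_le_succ fun n => (hg n).2.subset
  have hcard : StrictMono fun n => (g n).card :=
    strictMono_nat_of_lt_succ fun n => Finset.card_lt_card (hg n).2
  have hlim : Tendsto (fun n a => decide (a ∈ g (n + 1))) atTop
      (𝓝 fun a => decide (∃ n, a ∈ g n)) := by
    refine tendsto_pi_nhds.2 fun a => tendsto_nhds_of_eventually_eq ?_
    by_cases ha : ∃ n, a ∈ g n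
    · obtain ⟨n₀, hn₀⟩ := ha
      filter_upwards [eventually_ge_atTop n₀] with n hn
      simp only [hmono (by omega : n₀ ≤ n + 1) hn₀, decide_true]
      exact (decide_eq_true ⟨n₀, hn₀⟩).symm
    · exact Eventually.of_forall fun n => by simp [not_exists.1 ha]
  obtain ⟨s, -, hs⟩ := hF.mem_of_tendsto hlim
    (Eventually.of_forall fun n => ⟨g (n + 1), (hg n).1, by simp⟩)
  have hsub : g (s.card + 1) ⊆ s := fun a ha => (hs a).1 (decide_eq_true ⟨_, ha⟩)
  have := Finset.card_le_card hsub
  have := hcard.le_apply (x := s.card + 1)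
  omega

def IsProbabilityOn (A : Set ι) (lam : ι →₀ ℝ) : Prop :=
  ↑lam.support ⊆ A ∧ 0 ≤ lam ∧ (lam.sum fun _ c => c) = 1

def SmallOnExtensions [DecidableEq ι] (F : Set (Finset ι)) (T : Finset (Finset ι)) (δ : ℝ)
    (lam : ι →₀ ℝ) : Prop :=
  ∀ t ∈ T, ∀ w, t ∪ w ∈ F → ∑ γ ∈ w, lam γ < δ

theorem isProbabilityOn_single {A : Set ι} {a : ι} (ha : a ∈ A) :
    IsProbabilityOn A (Finsupp.single a 1) := by
  refine ⟨?_, Finsupp.single_nonneg.2 zero_le_one, Finsupp.sum_single_index rfl⟩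
  exact (Finset.coe_subset.2 Finsupp.support_single_subset).trans (by simpa using ha)

/-- Sum of `n` blocks, each chosen small on the extensions `insert m t ∈ F` of `t ∈ T` by points
`m` of the earlier blocks: a set `w` with `t ∪ w ∈ F` gets weight at most `1` from the first block
it meets and less than `η` from each later one. -/
theorem exists_nonneg_sum_eq_nat_smallOnExtensions [DecidableEq ι]
    (hher : ∀ s ∈ F, ∀ t ⊆ s, t ∈ F) {T : Finset (Finset ι)} {A : Set ι} (hA : A.Infinite)
    (hTA : ∀ t ∈ T, Disjoint (↑t) A) {η : ℝ} (hη : 0 < η)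
    (hstep : ∀ T' : Finset (Finset ι), (∀ x ∈ T', ∃ t ∈ T, ProperExtensionIn F x t) →
      ∀ A' : Set ι, A'.Infinite → ∃ lam, IsProbabilityOn A' lam ∧ SmallOnExtensions F T' η lam)
    (n : ℕ) :
    ∃ lam : ι →₀ ℝ, ↑lam.support ⊆ A ∧ 0 ≤ lam ∧ (lam.sum fun _ c => c) = n ∧
      SmallOnExtensions F T (1 + n * η) lam := by
  classical
  induction n with
  | zero => exact ⟨0, by simp, le_rfl, by simp, fun t _ w _ => by simp⟩
  | succ n ih =>
    obtain ⟨lam, hsupp, hnonneg, hmass, hsmall⟩ := ih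
    set T' := ((T ×ˢ lam.support).image fun p => insert p.2 p.1).filter (· ∈ F)
    have hT' : ∀ x ∈ T', ∃ t ∈ T, ProperExtensionIn F x t := by
      intro x hx
      simp only [T', Finset.mem_filter, Finset.mem_image, Finset.mem_product] at hx
      obtain ⟨⟨⟨t, m⟩, ⟨ht, hm⟩, rfl⟩, hxF⟩ := hx
      exact ⟨t, ht, hxF,
        Finset.ssubset_insert fun hmt => Set.disjoint_left.1 (hTA t ht) hmt (hsupp hm)⟩
    obtain ⟨lam', ⟨hsupp', hnonneg', hmass'⟩, hsmall'⟩ :=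
      hstep T' hT' _ (hA.sdiff lam.support.finite_toSet)
    refine ⟨lam + lam', ?_, add_nonneg hnonneg hnonneg', ?_, fun t ht w hw => ?_⟩
    · refine (Finset.coe_subset.2 Finsupp.support_add).trans ?_
      rw [Finset.coe_union]
      exact Set.union_subset hsupp (hsupp'.trans Set.sdiff_subset)
    · rw [Finsupp.sum_add_index' (fun _ => rfl) (fun _ _ _ => rfl), hmass, hmass']
      push_cast
      ring
    simp only [Finsupp.add_apply, Finset.sum_add_distrib]
    by_cases hm : ∃ m ∈ w, m ∈ lam.support
    · obtain ⟨m, hmw, hm⟩ := hm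
      have hins : insert m t ∈ T' :=
        Finset.mem_filter.2 ⟨Finset.mem_image.2 ⟨(t, m), Finset.mem_product.2 ⟨ht, hm⟩, rfl⟩,
          hher _ hw _ <|
            Finset.insert_subset (Finset.mem_union_right _ hmw) Finset.subset_union_left⟩
      have hold := hsmall t ht w hw
      have hnew := hsmall' _ hins w (by
        rwa [Finset.insert_union, Finset.insert_eq_of_mem (Finset.mem_union_right _ hmw)])
      push_cast
      linarith
    · have hold : ∑ γ ∈ w, lam γ = 0 := Finset.sum_eq_zero fun γ hγ =>
        Finsupp.notMem_support_iff.1 fun h => hm ⟨γ, hγ, h⟩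
      have hnew := sum_le_sum_support_of_nonneg hnonneg' w
      have hnη : (0 : ℝ) ≤ n * η := by positivity
      push_cast
      linarith

theorem exists_isProbabilityOn_smallOnExtensions_of_rank_lt [DecidableEq ι]
    [IsWellFounded (Finset ι) (ProperExtensionIn F)] (hher : ∀ s ∈ F, ∀ t ⊆ s, t ∈ F)
    (ρ : Ordinal) {T : Finset (Finset ι)}
    (hT : ∀ t ∈ T, IsWellFounded.rank (ProperExtensionIn F) t < ρ)
    {A : Set ι} (hA : A.Infinite) {δ : ℝ} (hδ : 0 < δ) :
    ∃ lam, IsProbabilityOn A lam ∧ SmallOnExtensions F T δ lam := by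
  induction ρ using WellFoundedLT.induction generalizing T A δ with
  | _ ρ IH =>
  rcases T.eq_empty_or_nonempty with rfl | ⟨t₀, ht₀⟩
  · obtain ⟨a, ha⟩ := hA.nonempty
    exact ⟨_, isProbabilityOn_single ha, fun t ht => absurd ht (Finset.notMem_empty t)⟩
  set ρ' := T.sup (IsWellFounded.rank (ProperExtensionIn F))
  have hρ' : ρ' < ρ := (Finset.sup_lt_iff (bot_le.trans_lt (hT t₀ ht₀))).2 hT
  have hstep : ∀ T' : Finset (Finset ι), (∀ x ∈ T', ∃ t ∈ T, ProperExtensionIn F x t) →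
      ∀ A' : Set ι, A'.Infinite →
        ∃ lam, IsProbabilityOn A' lam ∧ SmallOnExtensions F T' (δ / 2) lam := by
    intro T' hT' A' hA'
    refine IH ρ' hρ' (fun x hx => ?_) hA' (half_pos hδ)
    obtain ⟨t, ht, hxt⟩ := hT' x hx
    exact (IsWellFounded.rank_lt_of_rel hxt).trans_le
      (Finset.le_sup (f := IsWellFounded.rank _) ht)
  have hTA : ∀ t ∈ T, Disjoint (↑t) (A \ ↑(T.sup id)) := fun t ht =>
    Set.disjoint_sdiff_right.mono_left (Finset.coe_subset.2 (Finset.le_sup (f := id) ht))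
  obtain ⟨k, hk⟩ := exists_nat_one_div_lt (half_pos hδ)
  have hk0 : (0 : ℝ) < k + 1 := by positivity
  obtain ⟨lam, hsupp, hnonneg, hmass, hsmall⟩ :=
    exists_nonneg_sum_eq_nat_smallOnExtensions hher (hA.sdiff (T.sup id).finite_toSet) hTA
      (half_pos hδ) hstep (k + 1)
  refine ⟨((k : ℝ) + 1)⁻¹ • lam, ⟨?_, ?_, ?_⟩, fun t ht w hw => ?_⟩
  · exact (Finset.coe_subset.2 Finsupp.support_smul).trans (hsupp.trans Set.sdiff_subset)
  · exact smul_nonneg (inv_nonneg.2 hk0.le) hnonneg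
  · rw [Finsupp.sum_smul_index' fun _ => rfl]
    simp only [smul_eq_mul]
    rw [← Finsupp.mul_sum, hmass]
    push_cast
    exact inv_mul_cancel₀ hk0.ne'
  · have hw := hsmall t ht w hw
    rw [div_lt_iff₀ hk0] at hk
    simp only [Finsupp.smul_apply, smul_eq_mul, ← Finset.mul_sum]
    rw [inv_mul_lt_iff₀ hk0]
    push_cast at hw
    linarith

theorem exists_isProbabilityOn_sum_lt [IsWellFounded (Finset ι) (ProperExtensionIn F)]
    (hher : ∀ s ∈ F, ∀ t ⊆ s, t ∈ F) {A : Set ι} (hA : A.Infinite) {δ : ℝ} (hδ : 0 < δ) :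
    ∃ lam, IsProbabilityOn A lam ∧ ∀ w ∈ F, ∑ γ ∈ w, lam γ < δ := by
  classical
  obtain ⟨lam, hlam, hsmall⟩ := exists_isProbabilityOn_smallOnExtensions_of_rank_lt hher
    (Order.succ (IsWellFounded.rank (ProperExtensionIn F) ∅)) (T := {∅})
    (by simp) hA hδ
  exact ⟨lam, hlam, fun w hw => hsmall ∅ (Finset.mem_singleton_self _) w (by simpa using hw)⟩

theorem exists_isProbabilityOn_mul_normF_lt [IsWellFounded (Finset ι) (ProperExtensionIn F)]
    (hher : ∀ s ∈ F, ∀ t ⊆ s, t ∈ F) {A : Set ι} (hA : A.Infinite) (C : ℝ) {ε : ℝ}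
    (hε : 0 < ε) : ∃ lam, IsProbabilityOn A lam ∧ C * normF F lam < ε := by
  obtain ⟨δ, hδ, hCδ⟩ := exists_pos_mul_lt hε (max C 0)
  obtain ⟨lam, hlam, hsmall⟩ := exists_isProbabilityOn_sum_lt hher hA hδ
  have hnorm : normF F lam ≤ δ := normF_le hδ.le fun w hw => by
    rw [abs_of_nonneg (Finset.sum_nonneg fun γ _ => hlam.2.1 γ)]
    exact (hsmall w hw).le
  refine ⟨lam, hlam, ?_⟩
  calc C * normF F lam ≤ max C 0 * normF F lam :=
        mul_le_mul_of_nonneg_right (le_max_left _ _) (normF_nonneg lam)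
    _ ≤ max C 0 * δ := mul_le_mul_of_nonneg_left hnorm (le_max_right _ _)
    _ < ε := hCδ

theorem finite_setOf_le_apply_single [IsWellFounded (Finset ι) (ProperExtensionIn F)]
    (hher : ∀ s ∈ F, ∀ t ⊆ s, t ∈ F) (f : (ι →₀ ℝ) →ₗ[ℝ] ℝ) {C : ℝ}
    (hf : ∀ x, |f x| ≤ C * normF F x) {ε : ℝ} (hε : 0 < ε) :
    {γ | ε ≤ f (Finsupp.single γ 1)}.Finite := by
  by_contra hinf
  obtain ⟨lam, ⟨hsupp, hnonneg, hmass⟩, hnorm⟩ :=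
    exists_isProbabilityOn_mul_normF_lt hher hinf C hε
  have hfx : ε ≤ f lam := calc
    ε = lam.sum fun _ c => c * ε := by rw [← Finsupp.sum_mul, hmass, one_mul]
    _ ≤ lam.sum fun γ c => c * f (Finsupp.single γ 1) :=
        Finset.sum_le_sum fun γ hγ => mul_le_mul_of_nonneg_left (hsupp hγ) (hnonneg γ)
    _ = f lam := (apply_eq_sum_mul_apply_single f lam).symm
  linarith [le_abs_self (f lam), hf lam]

theorem finite_setOf_le_abs_apply_single [IsWellFounded (Finset ι) (ProperExtensionIn F)]
    (hher : ∀ s ∈ F, ∀ t ⊆ s, t ∈ F) (f : (ι →₀ ℝ) →ₗ[ℝ] ℝ)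
    (hf : ∃ C, ∀ x, |f x| ≤ C * normF F x) {ε : ℝ} (hε : 0 < ε) :
    {γ | ε ≤ |f (Finsupp.single γ 1)|}.Finite := by
  obtain ⟨C, hC⟩ := hf
  refine ((finite_setOf_le_apply_single hher f hC hε).union
    (finite_setOf_le_apply_single hher (-f) (C := C) (fun x => ?_) hε)).subset fun γ hγ => ?_
  · simpa using hC x
  · simpa [le_abs] using hγ

theorem exists_spreading_mul_normF_lt [LinearOrder ι]
    [IsWellFounded (Finset ι) (ProperExtensionIn F)] (hher : ∀ s ∈ F, ∀ t ⊆ s, t ∈ F)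
    (hlarge : ∀ A : Set ι, A.Infinite → ∀ n : ℕ, ∃ s ∈ F, ↑s ⊆ A ∧ s.card = n)
    {A : Set ι} (hA : A.Infinite) (K : ℝ) :
    ∃ s t : Finset ι, ↑s ⊆ A ∧ ↑t ⊆ A ∧ ∃ h : s.card = t.card, ∃ a : Fin s.card → ℝ,
      K * normF F (∑ i, a i • Finsupp.single (s.orderEmbOfFin rfl i) (1 : ℝ)) <
        normF F (∑ i, a i • Finsupp.single (t.orderEmbOfFin h.symm i) (1 : ℝ)) := by
  obtain ⟨lam, ⟨hsupp, -, hmass⟩, hnorm⟩ := exists_isProbabilityOn_mul_normF_lt hher hA K one_pos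
  obtain ⟨t, htF, htA, htcard⟩ := hlarge A hA lam.support.card
  refine ⟨lam.support, t, hsupp, htA, htcard.symm,
    fun i => lam (lam.support.orderEmbOfFin rfl i), ?_⟩
  have hs : ∑ i, lam (lam.support.orderEmbOfFin rfl i) •
      Finsupp.single (lam.support.orderEmbOfFin rfl i) (1 : ℝ) = lam := by
    rw [Finset.sum_orderEmbOfFin lam.support fun γ => lam γ • Finsupp.single γ (1 : ℝ)]
    simp only [Finsupp.smul_single_one]
    exact Finsupp.sum_single lam
  have ht := abs_sum_le_normF htF (∑ i, lam (lam.support.orderEmbOfFin rfl i) •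
      Finsupp.single (t.orderEmbOfFin htcard i) (1 : ℝ))
  rw [sum_apply_sum_smul_single _ _ fun i _ => t.orderEmbOfFin_mem htcard i,
    Finset.sum_orderEmbOfFin lam.support lam, show ∑ γ ∈ lam.support, lam γ = 1 from hmass,
    abs_one] at ht
  rw [hs]
  exact hnorm.trans_le ht

end

theorem stmt15_general (κ : Cardinal)
    (F : Set (Finset {α : Ordinal // α < κ.ord}))
    (hher : ∀ s ∈ F, ∀ t ⊆ s, t ∈ F)
    (hclosed : IsClosed {f : {α : Ordinal // α < κ.ord} → Bool |
      ∃ s ∈ F, ∀ a, f a = true ↔ a ∈ s})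
    (hlarge : ∀ A : Set {α : Ordinal // α < κ.ord}, A.Infinite →
      ∀ n : ℕ, ∃ s ∈ F, ↑s ⊆ A ∧ s.card = n)
    (hsingle : ∀ γ : {α : Ordinal // α < κ.ord}, ({γ} : Finset _) ∈ F) :
    -- (i) the unit vectors are normalized
    (∀ γ, normF F (Finsupp.single γ 1) = 1) ∧
    -- (ii) the unit vectors are weakly null
    (∀ f : ({α : Ordinal // α < κ.ord} →₀ ℝ) →ₗ[ℝ] ℝ,
      (∃ C : ℝ, ∀ x, |f x| ≤ C * normF F x) →
      ∀ ε : ℝ, 0 < ε → {γ | ε ≤ |f (Finsupp.single γ 1)|}.Finite) ∧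
    -- (iii) no infinite subsequence is subsymmetric
    (∀ A : Set {α : Ordinal // α < κ.ord}, A.Infinite → ∀ K : ℝ, 1 ≤ K →
      ∃ s t : Finset {α : Ordinal // α < κ.ord}, ↑s ⊆ A ∧ ↑t ⊆ A ∧
        ∃ h : s.card = t.card, ∃ a : Fin s.card → ℝ,
          K * normF F (∑ i, a i • Finsupp.single (s.orderEmbOfFin rfl i) (1 : ℝ)) <
            normF F (∑ i, a i • Finsupp.single (t.orderEmbOfFin h.symm i) (1 : ℝ))) := by
  have : IsWellFounded _ (ProperExtensionIn F) :=
    ⟨wellFounded_properExtensionIn_of_isClosed hclosed⟩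
  exact ⟨fun γ => normF_single_one (hsingle γ),
    fun f hf _ hε => finite_setOf_le_abs_apply_single hher f hf hε,
    fun _ hA K _ => exists_spreading_mul_normF_lt hher hlarge hA K⟩

/-- Given a hereditary, compact and large family `F` of finite subsets of an infinite
cardinal `κ` containing all singletons, the unit vectors of `(c₀₀(κ), ‖·‖_F)` form a
normalized weakly null sequence with no subsymmetric subsequence. -/
theorem stmt15 (κ : Cardinal) (hκ : Cardinal.aleph0 ≤ κ)
    (F : Set (Finset {α : Ordinal // α < κ.ord}))
    (hher : ∀ s ∈ F, ∀ t ⊆ s, t ∈ F)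
    (hclosed : IsClosed {f : {α : Ordinal // α < κ.ord} → Bool |
      ∃ s ∈ F, ∀ a, f a = true ↔ a ∈ s})
    (hlarge : ∀ A : Set {α : Ordinal // α < κ.ord}, A.Infinite →
      ∀ n : ℕ, ∃ s ∈ F, ↑s ⊆ A ∧ s.card = n)
    (hsingle : ∀ γ : {α : Ordinal // α < κ.ord}, ({γ} : Finset _) ∈ F) :
    -- (i) the unit vectors are normalized
    (∀ γ, normF F (Finsupp.single γ 1) = 1) ∧
    -- (ii) the unit vectors are weakly null
    (∀ f : ({α : Ordinal // α < κ.ord} →₀ ℝ) →ₗ[ℝ] ℝ,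
      (∃ C : ℝ, ∀ x, |f x| ≤ C * normF F x) →
      ∀ ε : ℝ, 0 < ε → {γ | ε ≤ |f (Finsupp.single γ 1)|}.Finite) ∧
    -- (iii) no infinite subsequence is subsymmetric
    (∀ A : Set {α : Ordinal // α < κ.ord}, A.Infinite → ∀ K : ℝ, 1 ≤ K →
      ∃ s t : Finset {α : Ordinal // α < κ.ord}, ↑s ⊆ A ∧ ↑t ⊆ A ∧
        ∃ h : s.card = t.card, ∃ a : Fin s.card → ℝ,
          K * normF F (∑ i, a i • Finsupp.single (s.orderEmbOfFin rfl i) (1 : ℝ)) <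
            normF F (∑ i, a i • Finsupp.single (t.orderEmbOfFin h.symm i) (1 : ℝ))) :=
  stmt15_general κ F hher hclosed hlarge hsingle
end

section
/- Let κ be a cardinal, B a hereditary family of finite subsets of κ, and n ≥ 1. Suppose σ is a winning strategy for Player II in the (B,n)-game: σ maps finite subsets of κ to elements of κ with max(s) < σ(s) for nonempty s, and for all ordinals γ_0 < γ_1 < … < γ_{n−1} < κ with σ({γ_0, …, γ_i}) < γ_{i+1} for every i < n−1, the set {γ_0, …, γ_{n−1}} does not belong to B. Let C ⊆ κ be nonempty, unbounded in itself (every element of C has a strictly larger element of C), and closed under σ (for every γ ∈ C, every finite s ⊆ {α : α ≤ γ}, and every δ ∈ C with γ < δ, σ(s) < δ). Then: (i) whenever γ_0 < … < γ_{n−1} are in C and for each i < n−1 there is an element of C strictly between γ_i and γ_{i+1}, the set {γ_0, …, γ_{n−1}} is not in ϖ_C(B); and (ii) every member of ϖ_C(B) has fewer than 2n−1 elements. -/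
open scoped Classical

/-- `ϖ_C(ξ)`: the least element of `C` that is `≥ ξ`. -/
noncomputable def piC (C : Set Ordinal) (ξ : Ordinal) : Ordinal :=
  sInf {δ | δ ∈ C ∧ ξ ≤ δ}

/-- `ϖ_C(B)`: the family of pointwise `ϖ_C`-images of the members of `B` contained in
`sup C`. -/
noncomputable def piImage (C : Set Ordinal) (B : Set (Finset Ordinal)) :
    Set (Finset Ordinal) :=
  {t | ∃ s ∈ B, (∀ a ∈ s, a < sSup C) ∧ t = s.image (piC C)}

/-- If `σ` is a winning strategy for Player II in the `(B,n)`-game and `C` is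
unbounded in itself and closed under `σ`, then (i) no `n` elements of `C` separated
by elements of `C` form a member of `ϖ_C(B)`, and (ii) every member of `ϖ_C(B)` has
fewer than `2n - 1` elements. -/
theorem stmt18 (κ : Cardinal) (B : Set (Finset Ordinal))
    (hher : ∀ s ∈ B, ∀ t ⊆ s, t ∈ B)
    (n : ℕ) (hn : 1 ≤ n)
    (σ : Finset Ordinal → Ordinal)
    (hσκ : ∀ s : Finset Ordinal, ↑s ⊆ Set.Iio κ.ord → σ s < κ.ord)
    (hσgt : ∀ s : Finset Ordinal, s.Nonempty → ∀ a ∈ s, a < σ s)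
    (hwin : ∀ g : ℕ → Ordinal,
      (∀ i, i < n → g i < κ.ord) →
      (∀ i, i + 1 < n → g i < g (i + 1)) →
      (∀ i, i + 1 < n → σ ((Finset.range (i + 1)).image g) < g (i + 1)) →
      (Finset.range n).image g ∉ B)
    (C : Set Ordinal) (hCκ : C ⊆ Set.Iio κ.ord) (hCne : C.Nonempty)
    (hCub : ∀ γ ∈ C, ∃ δ ∈ C, γ < δ)
    (hCcl : ∀ γ ∈ C, ∀ s : Finset Ordinal, (∀ a ∈ s, a ≤ γ) →
      ∀ δ ∈ C, γ < δ → σ s < δ) :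
    -- (i)
    (∀ g : ℕ → Ordinal,
      (∀ i, i < n → g i ∈ C) →
      (∀ i, i + 1 < n → g i < g (i + 1)) →
      (∀ i, i + 1 < n → ∃ β ∈ C, g i < β ∧ β < g (i + 1)) →
      (Finset.range n).image g ∉ piImage C B) ∧
    -- (ii)
    (∀ t ∈ piImage C B, t.card < 2 * n - 1) := by
  have hbdd : BddAbove C := ⟨κ.ord, fun c hc => le_of_lt (hCκ hc)⟩
  have hpi : ∀ ξ, ξ < sSup C → piC C ξ ∈ C ∧ ξ ≤ piC C ξ := by
    intro ξ hξ
    obtain ⟨c, hc, hlt⟩ := (lt_csSup_iff hbdd hCne).1 hξ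
    have hne : {δ | δ ∈ C ∧ ξ ≤ δ}.Nonempty := ⟨c, hc, hlt.le⟩
    exact csInf_mem hne
  have hpile : ∀ ξ c, c ∈ C → ξ ≤ c → piC C ξ ≤ c := fun ξ c hc h => csInf_le' ⟨hc, h⟩
  have part1 : ∀ g : ℕ → Ordinal,
      (∀ i, i < n → g i ∈ C) →
      (∀ i, i + 1 < n → g i < g (i + 1)) →
      (∀ i, i + 1 < n → ∃ β ∈ C, g i < β ∧ β < g (i + 1)) →
      (Finset.range n).image g ∉ piImage C B := by
    intro g hgC hgmono hgsep hmem
    obtain ⟨s, hsB, hslt, hts⟩ := hmem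
    have hgmono' : ∀ i j, i ≤ j → j < n → g i ≤ g j := by
      intro i j hij hj
      induction j with
      | zero => simp [Nat.le_zero.1 hij]
      | succ k ih =>
        rcases Nat.lt_or_ge i (k+1) with h | h
        · exact (ih (Nat.lt_succ_iff.1 h) (Nat.lt_of_succ_lt hj)).trans
            (le_of_lt (hgmono k hj))
        · have : i = k + 1 := le_antisymm hij h
          simp [this]
    have hex : ∀ i, i < n → ∃ a, a ∈ s ∧ piC C a = g i := by
      intro i hi
      have hgt : g i ∈ (Finset.range n).image g :=
        Finset.mem_image.2 ⟨i, Finset.mem_range.2 hi, rfl⟩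
      rw [hts] at hgt
      obtain ⟨a, ha, hpa⟩ := Finset.mem_image.1 hgt
      exact ⟨a, ha, hpa⟩
    set d : ℕ → Ordinal := fun i => if h : i < n then Classical.choose (hex i h) else 0
      with hd_def
    have hd : ∀ i, (h : i < n) → d i ∈ s ∧ piC C (d i) = g i := by
      intro i h
      simp only [hd_def, dif_pos h]
      exact Classical.choose_spec (hex i h)
    have hdle : ∀ i, (h : i < n) → d i ≤ g i := by
      intro i h
      have h2 := (hpi (d i) (hslt _ (hd i h).1)).2
      rw [(hd i h).2] at h2
      exact h2
    have hβlt : ∀ i, (h : i+1 < n) → ∀ β, β ∈ C → β < g (i+1) → β < d (i+1) := by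
      intro i h β hβ hlt
      by_contra hle
      have h2 : piC C (d (i+1)) ≤ β := hpile _ _ hβ (not_lt.1 hle)
      rw [(hd _ h).2] at h2
      exact absurd hlt (not_lt.2 h2)
    have hdlt : ∀ i, i + 1 < n → d i < d (i+1) := by
      intro i hi
      obtain ⟨β, hβC, h1, h2⟩ := hgsep i hi
      exact lt_of_le_of_lt (hdle i (Nat.lt_of_succ_lt hi))
        (lt_trans h1 (hβlt i hi β hβC h2))
    have hnotB := hwin d
      (fun i hi => lt_of_le_of_lt (hdle i hi) (hCκ (hgC i hi)))
      hdlt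
      (by
        intro i hi
        obtain ⟨β, hβC, h1, h2⟩ := hgsep i hi
        have hσβ : σ ((Finset.range (i+1)).image d) < β := by
          refine hCcl (g i) (hgC i (Nat.lt_of_succ_lt hi)) _ ?_ β hβC h1
          intro a ha
          obtain ⟨j, hj, rfl⟩ := Finset.mem_image.1 ha
          have hj' : j ≤ i := Nat.lt_succ_iff.1 (Finset.mem_range.1 hj)
          exact (hdle j (lt_of_le_of_lt hj' (Nat.lt_of_succ_lt hi))).trans
            (hgmono' j i hj' (Nat.lt_of_succ_lt hi))
        exact hσβ.trans (hβlt i hi β hβC h2))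
    apply hnotB
    apply hher s hsB
    intro x hx
    obtain ⟨i, hi, rfl⟩ := Finset.mem_image.1 hx
    exact (hd i (Finset.mem_range.1 hi)).1
  refine ⟨part1, ?_⟩
  intro t ht
  by_contra hcard
  push_neg at hcard
  obtain ⟨s, hsB, hslt, hts⟩ := ht
  have htC : ∀ x ∈ t, x ∈ C := by
    intro x hx
    rw [hts] at hx
    obtain ⟨a, ha, rfl⟩ := Finset.mem_image.1 hx
    exact (hpi a (hslt a ha)).1
  set m := t.card with hm
  have hmge : 2 * n - 1 ≤ m := hcard
  let e := t.orderEmbOfFin (rfl : t.card = m)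
  have hidx : ∀ i, i < n → 2 * i < m := by intro i hi; omega
  set g : ℕ → Ordinal := fun i => if h : 2 * i < m then e ⟨2 * i, h⟩ else 0 with hg_def
  have hgval : ∀ i, (h : 2 * i < m) → g i = e ⟨2 * i, h⟩ := by
    intro i h; simp only [hg_def, dif_pos h]
  have hgt : ∀ i, i < n → g i ∈ t := by
    intro i hi
    rw [hgval i (hidx i hi)]
    exact t.orderEmbOfFin_mem rfl _
  have hgC : ∀ i, i < n → g i ∈ C := fun i hi => htC _ (hgt i hi)
  have hemono : StrictMono e := (t.orderEmbOfFin rfl).strictMono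
  have hgmono : ∀ i, i + 1 < n → g i < g (i + 1) := by
    intro i hi
    rw [hgval i (hidx i (Nat.lt_of_succ_lt hi)), hgval (i+1) (hidx _ hi)]
    exact hemono (by simp only [Fin.lt_def]; omega)
  have hgsep : ∀ i, i + 1 < n → ∃ β ∈ C, g i < β ∧ β < g (i + 1) := by
    intro i hi
    have h1 : 2 * i + 1 < m := by have := hidx (i+1) hi; omega
    refine ⟨e ⟨2 * i + 1, h1⟩, htC _ (t.orderEmbOfFin_mem rfl _), ?_, ?_⟩
    · rw [hgval i (hidx i (Nat.lt_of_succ_lt hi))]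
      exact hemono (by simp only [Fin.lt_def]; omega)
    · rw [hgval (i+1) (hidx _ hi)]
      exact hemono (by simp only [Fin.lt_def]; omega)
  refine part1 g hgC hgmono hgsep ?_
  set t' := (Finset.range n).image g with ht'
  refine ⟨s.filter (fun a => piC C a ∈ t'), hher s hsB _ (Finset.filter_subset _ _),
    fun a ha => hslt a (Finset.mem_of_mem_filter a ha), ?_⟩
  ext x
  constructor
  · intro hx
    obtain ⟨i, hi, rfl⟩ := Finset.mem_image.1 hx
    have hx2 : g i ∈ t := hgt i (Finset.mem_range.1 hi)
    rw [hts] at hx2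
    obtain ⟨a, ha, hpa⟩ := Finset.mem_image.1 hx2
    exact Finset.mem_image.2 ⟨a, Finset.mem_filter.2 ⟨ha, by rw [hpa]; exact hx⟩, hpa⟩
  · intro hx
    obtain ⟨a, ha, rfl⟩ := Finset.mem_image.1 hx
    exact (Finset.mem_filter.1 ha).2
end

section
/- Let κ be an uncountable regular cardinal, let B be a hereditary family of finite subsets of κ that is large (for every infinite A ⊆ κ and every n ∈ ℕ some n-element subset of A belongs to B), and let 0 < θ < 1. Then: (i) for every n ∈ ℕ Player I has a winning strategy in the (B,n)-game, i.e., there is σ mapping finite subsets of κ to κ with max(s) < σ(s) for nonempty s such that for all η_0 < … < η_{n−2} < κ with σ(∅) < η_0 and σ({η_0,…,η_{i−1}}) < η_i for each i, the set {σ(∅), σ({η_0}), …, σ({η_0,…,η_{n−2}})} ∈ B; and (ii) if ‖·‖ is a norm on c₀₀(κ) satisfying the Tsirelson implicit equation ‖x‖ = max{ ‖x‖_∞, sup{ θ·Σ_{i<d} ‖x·1_{E_i}‖ : (E_i)_{i<d} a B-admissible block sequence of finite subsets of κ } } for every x ∈ c₀₀(κ), then there is a set C ⊆ κ of cardinality κ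 such that the unit vectors (u_γ)_{γ∈C} are θ^{-1}-equivalent to the unit basis of ℓ₁(κ): θ·Σ_{γ∈s} |a_γ| ≤ ‖Σ_{γ∈s} a_γ u_γ‖ ≤ Σ_{γ∈s} |a_γ| for every finite s ⊆ C and all scalars (a_γ)_{γ∈s}. -/
/-!
Part (i) is a determinacy argument. If player I had no winning strategy, player II would have a
winning answer in every position lost for player I. Choose an increasing sequence `d` whose every
term exceeds these answers at all finite sets of earlier terms; adding the largest element last,
every subset of `range d` of size at most `n` is then a lost position. But largeness provides an
`n`-element subset of `range d` in `B`, which is won for player I.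

In (ii), admissible blocks are disjoint, so an admissible sum for a unit vector has at most one
nonzero term; as `θ < 1`, unit vectors have norm `1`, and the triangle inequality gives the upper
estimate. Let `C` be the set of points closed under all the strategies `σ n`; iterating `ω` times
stays below `κ` since `κ` is regular and uncountable, so `C` is cofinal and has size `κ`. For
`γ 0 < … < γ (m - 1)` in `C`, the play `γ` against `σ m` is legal, and the moves of player I
separate the singletons `{γ i}` into a `B`-admissible block sequence, so the implicit equation
gives the lower estimate.
-/

open scoped Classical

/-- A block sequence `(E_i)_{i<d}` of finite subsets of a linearly ordered index type
is `B`-admissible: there is `{γ_0 < … < γ_{d-1}} ∈ B` with `γ_0 ≤ min E_0` and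
`max E_i < γ_{i+1} ≤ min E_{i+1}` for every `i < d - 1`. -/
def AdmissibleI {ι : Type*} [LinearOrder ι] (B : Set (Finset ι))
    (E : ℕ → Finset ι) (d : ℕ) : Prop :=
  ∃ g : ℕ → ι,
    (Finset.range d).image g ∈ B ∧
    (∀ i, i + 1 < d → g i < g (i + 1)) ∧
    (0 < d → ∀ a ∈ E 0, g 0 ≤ a) ∧
    (∀ i, i + 1 < d → (∀ a ∈ E i, a < g (i + 1)) ∧ (∀ a ∈ E (i + 1), g (i + 1) ≤ a))

/-- The sup norm of a finitely supported function. -/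
noncomputable def supNorm {ι : Type*} (x : ι →₀ ℝ) : ℝ :=
  sSup (Set.range fun γ => |x γ|)

open Finset

section Game

variable {ι : Type*} [LinearOrder ι]

theorem Finset.exists_forall_lt [Nonempty ι] [NoMaxOrder ι] (s : Finset ι) :
    ∃ b, ∀ a ∈ s, a < b := by
  obtain ⟨M, hM⟩ := s.exists_le
  obtain ⟨b, hb⟩ := exists_gt M
  exact ⟨b, fun a ha => (hM a ha).trans_lt hb⟩

noncomputable def strictUpperBound [Nonempty ι] [NoMaxOrder ι] (s : Finset ι) : ι :=
  s.exists_forall_lt.choose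

theorem lt_strictUpperBound [Nonempty ι] [NoMaxOrder ι] {s : Finset ι} {a : ι} (ha : a ∈ s) :
    a < strictUpperBound s :=
  s.exists_forall_lt.choose_spec a ha

theorem Finset.image_range_add_one' {α : Type*} [DecidableEq α] (f : ℕ → α) (n : ℕ) :
    (range (n + 1)).image f = insert (f 0) ((range n).image fun i => f (i + 1)) := by
  rw [range_add_one', image_insert, map_eq_image, image_image]
  rfl

theorem exists_strictMono_forall_lt [Nonempty ι] [NoMaxOrder ι] (f : Finset ι → ι) :
    ∃ d : ℕ → ι, StrictMono d ∧ ∀ k, ∀ p ⊆ (range k).image d, f p < d k := by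
  let next : Finset ι → ι := fun D => strictUpperBound (D ∪ D.powerset.image f)
  let D : ℕ → Finset ι := fun k => Nat.rec ∅ (fun _ D => insert (next D) D) k
  have hD : ∀ k, (range k).image (fun j => next (D j)) = D k := by
    intro k
    induction k with
    | zero => rfl
    | succ k ih => rw [range_add_one, image_insert, ih]
  refine ⟨fun k => next (D k), strictMono_nat_of_lt_succ fun k => ?_, fun k p hp => ?_⟩
  · exact lt_strictUpperBound (mem_union_left _ (mem_insert_self _ _))
  · rw [hD] at hp
    exact lt_strictUpperBound (mem_union_right _ (mem_image_of_mem f (mem_powerset.2 hp)))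

def completions (F : Set (Finset ι)) (p : Finset ι) : Set (Finset ι) := {t | t ∪ p ∈ F}

@[simp]
theorem mem_completions {F : Set (Finset ι)} {p t : Finset ι} :
    t ∈ completions F p ↔ t ∪ p ∈ F :=
  Iff.rfl

@[simp]
theorem completions_empty (F : Set (Finset ι)) : completions F ∅ = F := by
  ext t
  simp

theorem completions_completions_singleton (F : Set (Finset ι)) (p : Finset ι) (a : ι) :
    completions (completions F p) {a} = completions F (insert a p) := by
  ext t
  rw [mem_completions, mem_completions, mem_completions, union_assoc, ← insert_eq]

/-- `FirstPlayerWins m F δ`: in the game above `δ` where player I plays some `γ > δ`, player II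
answers some `η > γ` and the game continues above `η`, player I can make his first `m` moves
form a member of `F`. -/
def FirstPlayerWins : ℕ → Set (Finset ι) → ι → Prop
  | 0, F, _ => ∅ ∈ F
  | m + 1, F, δ => ∃ γ, δ < γ ∧ ∀ η, γ < η → FirstPlayerWins m (completions F {γ}) η

theorem not_firstPlayerWins_succ_iff {m : ℕ} {F : Set (Finset ι)} {δ : ι} :
    ¬ FirstPlayerWins (m + 1) F δ ↔
      ∀ γ, δ < γ → ∃ η, γ < η ∧ ¬ FirstPlayerWins m (completions F {γ}) η := by
  simp [FirstPlayerWins]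

theorem firstPlayerWins_of_large [NoMaxOrder ι] {B : Set (Finset ι)}
    (hB : ∀ A : Set ι, A.Infinite → ∀ n : ℕ, ∃ s ∈ B, ↑s ⊆ A ∧ s.card = n) (n : ℕ) (δ : ι) :
    FirstPlayerWins n B δ := by
  have : Nonempty ι := ⟨δ⟩
  by_contra hlose
  let SecondWins : Finset ι → Prop := fun p =>
    ∃ η, (∀ a ∈ p, a < η) ∧ ¬ FirstPlayerWins (n - p.card) (completions B p) η
  choose! answer hanswer using fun p (hp : SecondWins p) => hp
  obtain ⟨d, hd, hd_answer⟩ := exists_strictMono_forall_lt answer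
  -- `d k` outruns player II's winning answers at all positions built from earlier terms.
  have key : ∀ p : Finset ι, ↑p ⊆ Set.range d → p.card ≤ n → SecondWins p := by
    intro p
    induction p using Finset.induction_on_max with
    | empty => exact fun _ _ => ⟨δ, by simp, by rwa [card_empty, completions_empty]⟩
    | insert a q hqa ih =>
      intro hsub hcard
      obtain ⟨k, rfl⟩ := hsub (mem_insert_self _ q)
      have hq : q ⊆ (range k).image d := fun x hx => by
        obtain ⟨j, rfl⟩ := hsub (mem_insert_of_mem hx)
        exact mem_image_of_mem d (mem_range.2 (hd.lt_iff_lt.1 (hqa _ hx)))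
      have hcard' : (insert (d k) q).card = q.card + 1 :=
        card_insert_of_notMem fun h => (hqa _ h).false
      obtain ⟨-, hlose_q⟩ :=
        hanswer q (ih (fun x hx => hsub (mem_insert_of_mem hx)) (by omega))
      rw [show n - q.card = n - (insert (d k) q).card + 1 by omega,
        not_firstPlayerWins_succ_iff] at hlose_q
      obtain ⟨η, hη, hlose⟩ := hlose_q (d k) (hd_answer k q hq)
      refine ⟨η, fun x hx => ?_, by rwa [completions_completions_singleton] at hlose⟩
      rcases mem_insert.1 hx with rfl | hx
      exacts [hη, (hqa x hx).trans hη]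
  obtain ⟨s, hsB, hsd, hs⟩ := hB _ (Set.infinite_range_of_injective hd.injective) n
  obtain ⟨η, -, hη⟩ := key s hsd hs.le
  rw [hs, Nat.sub_self] at hη
  exact hη (by simpa [FirstPlayerWins] using hsB)

/-- Player I answers the moves `η 0, …, η (i - 1)` of player II with `σ {η 0, …, η (i - 1)}`.
A legal play is automatically increasing, because `σ s` exceeds every element of `s`. -/
def IsWinningStrategy (F : Set (Finset ι)) (n : ℕ) (σ : Finset ι → ι) : Prop :=
  (∀ s, ∀ a ∈ s, a < σ s) ∧
    ∀ η : ℕ → ι, (∀ i, i < n - 1 → σ ((range i).image η) < η i) →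
      (range n).image (fun i => σ ((range i).image η)) ∈ F

/-- Open with `γ`; once player II has answered `a > γ`, continue with `τ a`. -/
noncomputable def consStrategy [Nonempty ι] [NoMaxOrder ι] (γ : ι) (τ : ι → Finset ι → ι)
    (s : Finset ι) : ι :=
  if h : s.Nonempty then
    if γ < s.min' h then τ (s.min' h) (s.erase (s.min' h)) else strictUpperBound s
  else γ

section consStrategy

variable [Nonempty ι] [NoMaxOrder ι] {γ : ι} {τ : ι → Finset ι → ι}

@[simp]
theorem consStrategy_empty : consStrategy γ τ ∅ = γ :=
  dif_neg Finset.not_nonempty_empty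

theorem consStrategy_insert {a : ι} {t : Finset ι} (ha : γ < a) (hat : ∀ x ∈ t, a < x) :
    consStrategy γ τ (insert a t) = τ a t := by
  have hmin : (insert a t).min' (insert_nonempty a t) = a :=
    le_antisymm (min'_le _ _ (mem_insert_self a t))
      (le_min' _ _ _ fun x hx => (mem_insert.1 hx).elim ge_of_eq fun hx => (hat x hx).le)
  rw [consStrategy, dif_pos (insert_nonempty a t), hmin, if_pos ha,
    erase_insert fun h => (hat a h).false]

theorem lt_consStrategy (hτ : ∀ a, γ < a → a < τ a ∅ ∧ ∀ t, ∀ x ∈ t, x < τ a t)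
    (s : Finset ι) : ∀ x ∈ s, x < consStrategy γ τ s := by
  intro x hx
  have hs : s.Nonempty := ⟨x, hx⟩
  rw [consStrategy, dif_pos hs]
  split_ifs with hγ
  · obtain ⟨hτ_empty, hτ_lt⟩ := hτ _ hγ
    rcases eq_or_ne x (s.min' hs) with rfl | hne
    · rcases (s.erase (s.min' hs)).eq_empty_or_nonempty with he | ⟨y, hy⟩
      · rwa [he]
      · exact (s.min'_lt_of_mem_erase_min' hs hy).trans (hτ_lt _ y hy)
    · exact hτ_lt _ x (mem_erase.2 ⟨hne, hx⟩)
  · exact lt_strictUpperBound hx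

end consStrategy

theorem FirstPlayerWins.exists_isWinningStrategy [NoMaxOrder ι] {m : ℕ} {F : Set (Finset ι)}
    {δ : ι} (h : FirstPlayerWins m F δ) : ∃ σ, δ < σ ∅ ∧ IsWinningStrategy F m σ := by
  have : Nonempty ι := ⟨δ⟩
  induction m generalizing F δ with
  | zero =>
    exact ⟨fun s => strictUpperBound (insert δ s), lt_strictUpperBound (mem_insert_self δ ∅),
      fun s a ha => lt_strictUpperBound (mem_insert_of_mem ha), fun η _ => h⟩
  | succ m ih =>
    obtain ⟨γ, hδγ, hγ⟩ := h
    choose! τ hτ using fun a (ha : γ < a) => ih (hγ a ha)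
    have hσ := lt_consStrategy fun a ha => ⟨(hτ a ha).1, (hτ a ha).2.1⟩
    refine ⟨consStrategy γ τ, by rwa [consStrategy_empty], hσ, fun η hη => ?_⟩
    rw [image_range_add_one', range_zero, image_empty, consStrategy_empty, insert_eq,
      union_comm, ← mem_completions]
    cases m with
    | zero => exact hγ _ (lt_strictUpperBound (mem_singleton_self γ))
    | succ m =>
      have hγη : γ < η 0 := by simpa using hη 0 (by omega)
      have hplay : ∀ i < m + 1, consStrategy γ τ ((range (i + 1)).image η) =
          τ (η 0) ((range i).image fun j => η (j + 1)) := by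
        intro i hi
        rw [image_range_add_one', consStrategy_insert hγη]
        simp only [mem_image, mem_range]
        rintro _ ⟨j, hj, rfl⟩
        exact (hσ _ _ (mem_image_of_mem η (by simp))).trans (hη (j + 1) (by omega))
      rw [image_congr fun i hi => hplay i (mem_range.1 hi)]
      exact (hτ _ hγη).2.2 _ fun i hi =>
        (hplay i (by omega)).symm.trans_lt (hη (i + 1) (by omega))

theorem exists_isWinningStrategy_of_large [Nonempty ι] [NoMaxOrder ι] {B : Set (Finset ι)}
    (hB : ∀ A : Set ι, A.Infinite → ∀ n : ℕ, ∃ s ∈ B, ↑s ⊆ A ∧ s.card = n) (n : ℕ) :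
    ∃ σ, IsWinningStrategy B n σ :=
  (firstPlayerWins_of_large hB n (Classical.arbitrary ι)).exists_isWinningStrategy.imp
    fun _ h => h.2

end Game

section SeminormFinsupp

variable {ι : Type*} {E : ℕ → Finset ι} {d : ℕ}

theorem supNorm_single (γ : ι) (c : ℝ) : supNorm (Finsupp.single γ c) = |c| := by
  have hle : ∀ r ∈ Set.range fun δ => |Finsupp.single γ c δ|, r ≤ |c| := by
    rintro _ ⟨δ, rfl⟩
    rcases eq_or_ne γ δ with rfl | h
    · simp
    · simp [h]
  exact le_antisymm (csSup_le ⟨_, γ, rfl⟩ hle) (le_csSup ⟨|c|, hle⟩ ⟨γ, by simp⟩)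

theorem Seminorm.apply_le_sum_single (p : Seminorm ℝ (ι →₀ ℝ)) (x : ι →₀ ℝ) :
    p x ≤ ∑ γ ∈ x.support, p (Finsupp.single γ (x γ)) := by
  conv_lhs => rw [← Finsupp.sum_single x]
  exact le_sum_of_subadditive p (map_zero p).le (map_add_le_add p) _ _

theorem Seminorm.sum_apply_filter_le [DecidableEq ι] (p : Seminorm ℝ (ι →₀ ℝ))
    (hE : (↑(range d) : Set ℕ).PairwiseDisjoint E) (x : ι →₀ ℝ) :
    ∑ i ∈ range d, p (x.filter fun γ => γ ∈ E i) ≤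
      ∑ γ ∈ x.support, p (Finsupp.single γ (x γ)) :=
  calc ∑ i ∈ range d, p (x.filter fun γ => γ ∈ E i)
      ≤ ∑ i ∈ range d, ∑ γ ∈ x.support ∩ E i, p (Finsupp.single γ (x γ)) := by
        gcongr with i
        refine (p.apply_le_sum_single _).trans_eq ?_
        rw [Finsupp.support_filter, filter_mem_eq_inter]
        exact sum_congr rfl fun γ hγ => by
          rw [Finsupp.filter_apply_pos _ _ (mem_inter.1 hγ).2]
    _ = ∑ γ ∈ (range d).biUnion (fun i => x.support ∩ E i), p (Finsupp.single γ (x γ)) :=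
        (sum_biUnion (hE.mono fun _ => inter_subset_right)).symm
    _ ≤ ∑ γ ∈ x.support, p (Finsupp.single γ (x γ)) :=
        sum_le_sum_of_subset_of_nonneg (biUnion_subset.2 fun _ _ => inter_subset_left)
          fun _ _ _ => apply_nonneg _ _

end SeminormFinsupp

section Tsirelson

variable {ι : Type*} [LinearOrder ι] {B : Set (Finset ι)} {E : ℕ → Finset ι} {d : ℕ}

theorem AdmissibleI.lt_of_lt (h : AdmissibleI B E d) {i j : ℕ} (hij : i < j) (hj : j < d)
    {a b : ι} (ha : a ∈ E i) (hb : b ∈ E j) : a < b := by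
  obtain ⟨g, -, hg, -, hsep⟩ := h
  have hmono : ∀ k, i + 1 ≤ k → k < d → g (i + 1) ≤ g k := by
    intro k hk
    induction k, hk using Nat.le_induction with
    | base => exact fun _ => le_rfl
    | succ k _ ih => exact fun hk => (ih (by omega)).trans (hg k hk).le
  obtain ⟨j, rfl⟩ : ∃ j', j = j' + 1 := ⟨j - 1, by omega⟩
  calc a < g (i + 1) := (hsep i (by omega)).1 a ha
    _ ≤ g (j + 1) := hmono _ hij hj
    _ ≤ b := (hsep j hj).2 b hb

theorem AdmissibleI.pairwiseDisjoint (h : AdmissibleI B E d) :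
    (↑(range d) : Set ℕ).PairwiseDisjoint E := by
  intro i hi j hj hij
  rcases hij.lt_or_gt with hlt | hlt
  · exact disjoint_left.2 fun _ ha hb => (h.lt_of_lt hlt (mem_range.1 hj) ha hb).false
  · exact disjoint_left.2 fun _ ha hb => (h.lt_of_lt hlt (mem_range.1 hi) hb ha).false

/-- The moves of player I witness the admissibility. -/
theorem IsWinningStrategy.admissibleI {m : ℕ} {σ : Finset ι → ι}
    (hσ : IsWinningStrategy B m σ) {η : ℕ → ι} (hη : ∀ i < m, σ ((range i).image η) < η i) :
    AdmissibleI B (fun i => {η i}) m := by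
  have hlt : ∀ i, η i < σ ((range (i + 1)).image η) := fun i =>
    hσ.1 _ _ (mem_image_of_mem η (self_mem_range_succ i))
  refine ⟨fun i => σ ((range i).image η), hσ.2 η fun i hi => hη i (by omega),
    fun i hi => (hη i (by omega)).trans (hlt i), fun hm a ha => ?_, fun i hi => ⟨?_, ?_⟩⟩
  · rw [mem_singleton.1 ha]
    exact (hη 0 hm).le
  · intro a ha
    rw [mem_singleton.1 ha]
    exact hlt i
  · intro a ha
    rw [mem_singleton.1 ha]
    exact (hη (i + 1) hi).le

def admissibleSums (B : Set (Finset ι)) (θ : ℝ) (N : (ι →₀ ℝ) → ℝ) (x : ι →₀ ℝ) : Set ℝ :=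
  {r : ℝ | ∃ (d : ℕ) (E : ℕ → Finset ι),
    (∀ i, i + 1 < d → ∀ a ∈ E i, ∀ b ∈ E (i + 1), a < b) ∧
    AdmissibleI B E d ∧
    r = θ * ∑ i ∈ Finset.range d, N (x.filter fun γ => γ ∈ E i)}

theorem bddAbove_admissibleSums (p : Seminorm ℝ (ι →₀ ℝ)) {θ : ℝ} (hθ : 0 ≤ θ)
    (x : ι →₀ ℝ) : BddAbove (admissibleSums B θ p x) := by
  refine ⟨θ * ∑ γ ∈ x.support, p (Finsupp.single γ (x γ)), ?_⟩
  rintro _ ⟨d, E, -, hE, rfl⟩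
  exact mul_le_mul_of_nonneg_left (p.sum_apply_filter_le hE.pairwiseDisjoint x) hθ

def SatisfiesTsirelsonEquation (B : Set (Finset ι)) (θ : ℝ) (p : Seminorm ℝ (ι →₀ ℝ)) : Prop :=
  ∀ x, p x = max (supNorm x) (sSup (admissibleSums B θ p x))

namespace SatisfiesTsirelsonEquation

variable {θ : ℝ} {p : Seminorm ℝ (ι →₀ ℝ)}

theorem le_apply_of_admissibleI (hp : SatisfiesTsirelsonEquation B θ p) (hθ : 0 ≤ θ)
    (hblock : ∀ i, i + 1 < d → ∀ a ∈ E i, ∀ b ∈ E (i + 1), a < b) (hE : AdmissibleI B E d)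
    (x : ι →₀ ℝ) : θ * ∑ i ∈ range d, p (x.filter fun γ => γ ∈ E i) ≤ p x := by
  rw [hp x]
  exact le_max_of_le_right (le_csSup (bddAbove_admissibleSums p hθ x) ⟨d, E, hblock, hE, rfl⟩)

/-- Admissible sums for a unit vector have at most one nonzero term, so they are at most
`θ` times its norm; with `θ < 1` the implicit equation leaves only the sup norm. -/
theorem apply_single_one (hp : SatisfiesTsirelsonEquation B θ p) (hθ0 : 0 ≤ θ) (hθ1 : θ < 1)
    (γ : ι) : p (Finsupp.single γ 1) = 1 := by
  have hS : sSup (admissibleSums B θ p (Finsupp.single γ 1)) ≤ θ * p (Finsupp.single γ 1) := by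
    refine Real.sSup_le ?_ (mul_nonneg hθ0 (apply_nonneg _ _))
    rintro _ ⟨d, E, -, hE, rfl⟩
    have h := p.sum_apply_filter_le hE.pairwiseDisjoint (Finsupp.single γ 1)
    rw [Finsupp.support_single _ one_ne_zero, sum_singleton,
      Finsupp.single_eq_same] at h
    exact mul_le_mul_of_nonneg_left h hθ0
  have h := hp (Finsupp.single γ 1)
  rw [supNorm_single, abs_one] at h
  rcases le_total (sSup (admissibleSums B θ p (Finsupp.single γ 1))) 1 with hle | hle
  · rwa [max_eq_left hle] at h
  · rw [max_eq_right hle] at h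
    nlinarith

theorem apply_single (hp : SatisfiesTsirelsonEquation B θ p) (hθ0 : 0 ≤ θ) (hθ1 : θ < 1)
    (γ : ι) (c : ℝ) : p (Finsupp.single γ c) = |c| := by
  rw [← Finsupp.smul_single_one, map_smul_eq_mul, hp.apply_single_one hθ0 hθ1, mul_one,
    Real.norm_eq_abs]

theorem apply_sum_smul_single_le (hp : SatisfiesTsirelsonEquation B θ p) (hθ0 : 0 ≤ θ)
    (hθ1 : θ < 1) (s : Finset ι) (a : ι → ℝ) :
    p (∑ γ ∈ s, a γ • Finsupp.single γ (1 : ℝ)) ≤ ∑ γ ∈ s, |a γ| :=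
  (le_sum_of_subadditive p (map_zero p).le (map_add_le_add p) s _).trans_eq
    (sum_congr rfl fun γ _ => by rw [Finsupp.smul_single_one, hp.apply_single hθ0 hθ1])

theorem le_apply_sum_smul_single (hp : SatisfiesTsirelsonEquation B θ p) (hθ0 : 0 ≤ θ)
    (hθ1 : θ < 1) {m : ℕ} {η : ℕ → ι} (hη : AdmissibleI B (fun i => {η i}) m) (a : ι → ℝ) :
    θ * ∑ γ ∈ (range m).image η, |a γ| ≤
      p (∑ γ ∈ (range m).image η, a γ • Finsupp.single γ (1 : ℝ)) := by
  set x := ∑ γ ∈ (range m).image η, a γ • Finsupp.single γ (1 : ℝ)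
  have hlt : ∀ {i j}, i < j → j < m → η i < η j := fun hij hj =>
    hη.lt_of_lt hij hj (mem_singleton_self _) (mem_singleton_self _)
  have hinj : Set.InjOn η (range m) := by
    intro i hi j hj hij
    by_contra hne
    rcases Ne.lt_or_gt hne with h | h
    exacts [(hlt h (mem_range.1 hj)).ne hij, (hlt h (mem_range.1 hi)).ne' hij]
  have hfilter : ∀ i ∈ range m, p (x.filter fun γ => γ ∈ ({η i} : Finset ι)) = |a (η i)| := by
    intro i hi
    have : x.filter (fun γ => γ ∈ ({η i} : Finset ι)) = Finsupp.single (η i) (a (η i)) := by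
      have hmem : ∃ j < m, η j = η i := ⟨i, mem_range.1 hi, rfl⟩
      ext δ
      simp [x, Finsupp.single_apply, hmem]
    rw [this, hp.apply_single hθ0 hθ1]
  calc θ * ∑ γ ∈ (range m).image η, |a γ|
      = θ * ∑ i ∈ range m, p (x.filter fun γ => γ ∈ ({η i} : Finset ι)) := by
        rw [sum_image hinj, sum_congr rfl hfilter]
    _ ≤ p x := hp.le_apply_of_admissibleI hθ0
        (fun i hi _ hb _ hc => hη.lt_of_lt (Nat.lt_succ_self i) hi hb hc) hη x

end SatisfiesTsirelsonEquation

end Tsirelson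

theorem Finset.exists_strictMonoOn_image_range {ι : Type*} [LinearOrder ι] [Nonempty ι]
    (s : Finset ι) : ∃ m, ∃ η : ℕ → ι, StrictMonoOn η (Set.Iio m) ∧ (range m).image η = s := by
  let e := s.orderEmbOfFin rfl
  let η : ℕ → ι := fun i => if h : i < s.card then e ⟨i, h⟩ else Classical.arbitrary ι
  have hη : ∀ i (h : i < s.card), η i = e ⟨i, h⟩ := fun i h => dif_pos h
  refine ⟨s.card, η, fun i hi j hj hij => ?_, ?_⟩
  · rw [hη i hi, hη j hj]
    exact e.strictMono hij
  · ext a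
    simp only [mem_image, mem_range]
    constructor
    · rintro ⟨i, hi, rfl⟩
      rw [hη i hi]
      exact s.orderEmbOfFin_mem rfl _
    · intro ha
      obtain ⟨⟨i, hi⟩, rfl⟩ := (s.range_orderEmbOfFin rfl).symm.subset ha
      exact ⟨i, hi, hη i hi⟩

def closurePoints {ι : Type*} [LinearOrder ι] (f : ℕ → Finset ι → ι) : Set ι :=
  {x | ∀ n t, (∀ a ∈ t, a < x) → f n t < x}

namespace Cardinal.IsRegular

variable {κ : Cardinal}

theorem exists_forall_lt_of_mk_lt (hreg : κ.IsRegular) {S : Set κ.ord.ToType} (hS : #S < κ) :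
    ∃ b, ∀ a ∈ S, a < b :=
  not_isCofinal_iff.1 fun h => (Order.cof_le h).not_gt (by rwa [Ordinal.cof_toType, hreg.cof_ord])

theorem mk_eq_of_isCofinal (hreg : κ.IsRegular) {C : Set κ.ord.ToType} (hC : IsCofinal C) :
    #C = κ :=
  le_antisymm ((mk_set_le C).trans_eq (mk_ord_toType κ))
    (by simpa [hreg.cof_ord] using Order.cof_le hC)

theorem exists_isLUB_range (hreg : κ.IsRegular) (hunc : ℵ₀ < κ) (v : ℕ → κ.ord.ToType) :
    ∃ x, IsLUB (Set.range v) x := by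
  obtain ⟨b, hb⟩ := hreg.exists_forall_lt_of_mk_lt
    ((le_aleph0_iff_set_countable.2 (Set.countable_range v)).trans_lt hunc)
  obtain ⟨x, hx, hmin⟩ := wellFounded_lt.has_min (upperBounds (Set.range v))
    ⟨b, fun a ha => (hb a ha).le⟩
  exact ⟨x, hx, fun y hy => not_lt.1 (hmin y hy)⟩

theorem exists_gt_forall_apply_lt (hreg : κ.IsRegular) (hunc : ℵ₀ < κ)
    (f : ℕ → Finset κ.ord.ToType → κ.ord.ToType) (z : κ.ord.ToType) :
    ∃ b, z < b ∧ ∀ n t, (∀ a ∈ t, a < z) → f n t < b := by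
  let g : ℕ × Finset (Set.Iio z) → κ.ord.ToType :=
    fun q => f q.1 (q.2.map (Function.Embedding.subtype _))
  have hIio : #(Set.Iio z) < κ :=
    (mk_Iio_lt z (by rw [mk_ord_toType, Ordinal.type_toType])).trans_eq (mk_ord_toType κ)
  have hfin : #(Finset (Set.Iio z)) < κ :=
    (mk_le_of_surjective List.toFinset_surjective).trans_lt
      ((mk_list_le_max _).trans_lt (max_lt hunc hIio))
  have hg : #(insert z (Set.range g) : Set κ.ord.ToType) < κ := by
    refine mk_insert_le.trans_lt (add_lt_of_lt hreg.aleph0_le (mk_range_le.trans_lt ?_)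
      (one_lt_aleph0.trans hunc))
    rw [mk_prod, mk_nat, lift_aleph0, lift_uzero]
    exact mul_lt_of_lt hreg.aleph0_le hunc hfin
  obtain ⟨b, hb⟩ := hreg.exists_forall_lt_of_mk_lt hg
  refine ⟨b, hb z (Set.mem_insert z _), fun n t ht => hb _ (Set.mem_insert_of_mem _ ?_)⟩
  exact ⟨(n, t.subtype (· ∈ Set.Iio z)), by simp [g, filter_true_of_mem ht]⟩

theorem isCofinal_closurePoints (hreg : κ.IsRegular) (hunc : ℵ₀ < κ)
    (f : ℕ → Finset κ.ord.ToType → κ.ord.ToType) :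
    IsCofinal (closurePoints f) := by
  choose step hz hstep using hreg.exists_gt_forall_apply_lt hunc f
  intro z
  have hv : StrictMono fun k => step^[k] z := strictMono_nat_of_lt_succ fun k => by
    rw [Function.iterate_succ_apply']
    exact hz _
  obtain ⟨x, hx⟩ := hreg.exists_isLUB_range hunc fun k => step^[k] z
  refine ⟨x, fun n t ht => ?_, hx.1 ⟨0, rfl⟩⟩
  have : ∀ᶠ k in Filter.atTop, ∀ a ∈ t, a < step^[k] z :=
    (Filter.eventually_all_finset t).2 fun a ha => by
      obtain ⟨_, ⟨k, rfl⟩, hk⟩ := (lt_isLUB_iff hx).1 (ht a ha)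
      exact Filter.eventually_atTop.2 ⟨k, fun j hj => hk.trans_le (hv.monotone hj)⟩
  obtain ⟨k, hk⟩ := this.exists
  calc f n t < step (step^[k] z) := hstep _ n t hk
    _ = step^[k + 1] z := (Function.iterate_succ_apply' ..).symm
    _ ≤ x := hx.1 ⟨k + 1, rfl⟩

end Cardinal.IsRegular

theorem stmt19_general (κ : Cardinal) (hreg : κ.IsRegular) (hunc : Cardinal.aleph0 < κ)
    (B : Set (Finset κ.ord.ToType))
    (hlarge : ∀ A : Set κ.ord.ToType, A.Infinite →
      ∀ n : ℕ, ∃ s ∈ B, ↑s ⊆ A ∧ s.card = n)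
    (θ : ℝ) (hθ0 : 0 < θ) (hθ1 : θ < 1) :
    -- (i) Player I has a winning strategy in the `(B,n)`-game for every `n`
    (∀ n : ℕ, ∃ σ : Finset κ.ord.ToType → κ.ord.ToType,
      (∀ s, ∀ a ∈ s, a < σ s) ∧
      ∀ η : ℕ → κ.ord.ToType,
        (∀ i, i + 1 < n - 1 → η i < η (i + 1)) →
        (∀ i, i < n - 1 → σ ((Finset.range i).image η) < η i) →
        (Finset.range n).image (fun i => σ ((Finset.range i).image η)) ∈ B) ∧
    -- (ii) the ℓ₁-copy inside any Tsirelson-type norm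
    (∀ N : (κ.ord.ToType →₀ ℝ) → ℝ,
      (∀ x, 0 ≤ N x) →
      (∀ x, N x = 0 ↔ x = 0) →
      (∀ (r : ℝ) (x), N (r • x) = |r| * N x) →
      (∀ x y, N (x + y) ≤ N x + N y) →
      -- the Tsirelson implicit equation
      (∀ x : κ.ord.ToType →₀ ℝ,
        N x = max (supNorm x)
          (sSup {r : ℝ | ∃ (d : ℕ) (E : ℕ → Finset κ.ord.ToType),
            (∀ i, i + 1 < d → ∀ a ∈ E i, ∀ b ∈ E (i + 1), a < b) ∧
            AdmissibleI B E d ∧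
            r = θ * ∑ i ∈ Finset.range d, N (x.filter fun γ => γ ∈ E i)})) →
      ∃ C : Set κ.ord.ToType, Cardinal.mk C = κ ∧
        ∀ s : Finset κ.ord.ToType, ↑s ⊆ C → ∀ a : κ.ord.ToType → ℝ,
          θ * ∑ γ ∈ s, |a γ| ≤ N (∑ γ ∈ s, a γ • Finsupp.single γ (1 : ℝ)) ∧
          N (∑ γ ∈ s, a γ • Finsupp.single γ (1 : ℝ)) ≤ ∑ γ ∈ s, |a γ|) := by
  have := Cardinal.noMaxOrder hreg.aleph0_le
  have := Cardinal.nonempty_ord_toType hreg.ne_zero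
  choose σ hσ using exists_isWinningStrategy_of_large hlarge
  refine ⟨fun n => ⟨σ n, (hσ n).1, fun η _ => (hσ n).2 η⟩, fun N _ _ hNsmul hNadd hN => ?_⟩
  let p : Seminorm ℝ (κ.ord.ToType →₀ ℝ) := Seminorm.of N hNadd hNsmul
  have hp : SatisfiesTsirelsonEquation B θ p := hN
  refine ⟨closurePoints σ, hreg.mk_eq_of_isCofinal (hreg.isCofinal_closurePoints hunc σ),
    fun s hs a => ⟨?_, hp.apply_sum_smul_single_le hθ0.le hθ1 s a⟩⟩
  obtain ⟨m, η, hη, rfl⟩ := s.exists_strictMonoOn_image_range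
  refine hp.le_apply_sum_smul_single hθ0.le hθ1 ((hσ m).admissibleI fun i hi => ?_) a
  refine hs (mem_image_of_mem η (mem_range.2 hi)) m _ fun b hb => ?_
  obtain ⟨j, hj, rfl⟩ := mem_image.1 hb
  exact hη (mem_range.1 hj |>.trans hi) hi (mem_range.1 hj)

/-- Let `κ` be an uncountable regular cardinal, `B` a hereditary large family of
finite subsets of `κ`, and `0 < θ < 1`.  Then (i) Player I has a winning strategy in
every `(B,n)`-game, and (ii) any norm on `c₀₀(κ)` satisfying the Tsirelson implicit
equation for `(θ, B)` admits a set `C` of `κ` many unit vectors that are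
`θ⁻¹`-equivalent to the unit basis of `ℓ₁(κ)`. -/
theorem stmt19 (κ : Cardinal) (hreg : κ.IsRegular) (hunc : Cardinal.aleph0 < κ)
    (B : Set (Finset κ.ord.ToType))
    (hher : ∀ s ∈ B, ∀ t ⊆ s, t ∈ B)
    (hlarge : ∀ A : Set κ.ord.ToType, A.Infinite →
      ∀ n : ℕ, ∃ s ∈ B, ↑s ⊆ A ∧ s.card = n)
    (θ : ℝ) (hθ0 : 0 < θ) (hθ1 : θ < 1) :
    -- (i) Player I has a winning strategy in the `(B,n)`-game for every `n`
    (∀ n : ℕ, ∃ σ : Finset κ.ord.ToType → κ.ord.ToType,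
      (∀ s, ∀ a ∈ s, a < σ s) ∧
      ∀ η : ℕ → κ.ord.ToType,
        (∀ i, i + 1 < n - 1 → η i < η (i + 1)) →
        (∀ i, i < n - 1 → σ ((Finset.range i).image η) < η i) →
        (Finset.range n).image (fun i => σ ((Finset.range i).image η)) ∈ B) ∧
    -- (ii) the ℓ₁-copy inside any Tsirelson-type norm
    (∀ N : (κ.ord.ToType →₀ ℝ) → ℝ,
      (∀ x, 0 ≤ N x) →
      (∀ x, N x = 0 ↔ x = 0) →
      (∀ (r : ℝ) (x), N (r • x) = |r| * N x) →
      (∀ x y, N (x + y) ≤ N x + N y) →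
      -- the Tsirelson implicit equation
      (∀ x : κ.ord.ToType →₀ ℝ,
        N x = max (supNorm x)
          (sSup {r : ℝ | ∃ (d : ℕ) (E : ℕ → Finset κ.ord.ToType),
            (∀ i, i + 1 < d → ∀ a ∈ E i, ∀ b ∈ E (i + 1), a < b) ∧
            AdmissibleI B E d ∧
            r = θ * ∑ i ∈ Finset.range d, N (x.filter fun γ => γ ∈ E i)})) →
      ∃ C : Set κ.ord.ToType, Cardinal.mk C = κ ∧
        ∀ s : Finset κ.ord.ToType, ↑s ⊆ C → ∀ a : κ.ord.ToType → ℝ,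
          θ * ∑ γ ∈ s, |a γ| ≤ N (∑ γ ∈ s, a γ • Finsupp.single γ (1 : ℝ)) ∧
          N (∑ γ ∈ s, a γ • Finsupp.single γ (1 : ℝ)) ≤ ∑ γ ∈ s, |a γ|) :=
  stmt19_general κ hreg hunc B hlarge θ hθ0 hθ1
end
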